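/- arXiv:2009.06298 — 4 statements merged into one kernel-verified Lean document; each statement's English description precedes it below -/
import Mathlib

section
/- Let F be a finite field, C_k(α,v,η) a TGRS code of length n and dimension k with 1 ≤ k ≤ n−k, u_i := ∏_{j≠i}(α_i − α_j)^{−1} and a := Σ_{i=1}^n α_i. Suppose a = 0 and η ≠ 0. Then the dual code C_k(α,v,η)^⊥ equals the linear code {((u_1/v_1)·g(α_1), …, (u_n/v_n)·g(α_n)) : g(x) = Σ_{i=0}^{n−k−1} b_i x^i − η·b_{n−k−1} x^{n−k} with b_0,…,b_{n−k−1} ∈ F}. -/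
/-!
Write `u i = ∏_{j ≠ i} (α i - α j)⁻¹` for the nodal weights. Lagrange interpolation gives
`∑ i, u i * P (α i) = P_{n-1} + P_n * ∑ i, α i` for every `P` of degree at most `n`.
If `f` is twisted with `+η` and hook `k - 1`, and `g` with `-η` and hook `n - k - 1`, the
coefficient of `X ^ (n - 1)` in `f * g` is `a_{k-1} (-η b_{n-k-1}) + η a_{k-1} b_{n-k-1} = 0`,
so when `∑ i, α i = 0` the proposed words are orthogonal to the code. Both codes are images of
evaluation maps that are injective on polynomials of degree `< n`; they have dimensions `k` and
`n - k`, which forces the inclusion into the dual to be an equality.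
-/

open Finset Polynomial

noncomputable section

/-- The twisted generalized Reed–Solomon (TGRS) code of length `n` and dimension `k`,
with evaluation points `α`, multipliers `v`, hook `k-1`, twist `1` and twist
coefficient `η`:  the set of words `(v i * f (α i))_i` where
`f(x) = Σ_{j<k} a_j x^j + η a_{k-1} x^k`. -/
def TGRSCode (F : Type*) [Field F] (n k : ℕ) (α v : Fin n → F) (η : F) :
    Set (Fin n → F) :=
  {c | ∃ a : ℕ → F, c = fun i =>
    v i * ((∑ j ∈ Finset.range k, a j * α i ^ j) + η * a (k - 1) * α i ^ k)}

/-- The dual of a code `C ⊆ F^n` under the standard inner product. -/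
def dualCode {F : Type*} [Field F] {n : ℕ} (C : Set (Fin n → F)) :
    Set (Fin n → F) :=
  {x | ∀ c ∈ C, ∑ i, x i * c i = 0}

/-- A code is self-dual if it coincides with its dual. -/
def IsSelfDual {F : Type*} [Field F] {n : ℕ} (C : Set (Fin n → F)) : Prop :=
  C = dualCode C

/-- The Hamming weight of a word. -/
def hwt {F : Type*} [Field F] {n : ℕ} (c : Fin n → F) : ℕ :=
  {i | c i ≠ 0}.ncard

/-- `C` has minimum (Hamming) distance exactly `d`. -/
def IsMinDist {F : Type*} [Field F] {n : ℕ} (C : Set (Fin n → F)) (d : ℕ) : Prop :=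
  (∃ c ∈ C, c ≠ 0 ∧ hwt c = d) ∧ ∀ c ∈ C, c ≠ 0 → d ≤ hwt c

namespace Lagrange

variable {F ι : Type*} [Field F] {s : Finset ι} {v : ι → F}

theorem coeff_card_pred_nodal (hs : s.Nonempty) (v : ι → F) :
    (nodal s v).coeff (#s - 1) = -∑ i ∈ s, v i := by
  rw [nodal_eq, prod_X_sub_C_coeff_card_pred s v hs.card_pos]

variable [DecidableEq ι]

theorem sum_nodalWeight_mul_eval_of_degree_lt (hvs : Set.InjOn v s) {P : F[X]}
    (hP : P.degree < #s) :
    ∑ i ∈ s, nodalWeight s v i * P.eval (v i) = P.coeff (#s - 1) := by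
  rw [coeff_eq_sum hvs hP]
  refine sum_congr rfl fun i _ => ?_
  rw [nodalWeight, prod_inv_distrib, div_eq_mul_inv, mul_comm]

/-- `P - P.coeff #s • nodal s v` takes the same values at the nodes and has degree `< #s`. -/
theorem sum_nodalWeight_mul_eval_of_natDegree_le (hvs : Set.InjOn v s) (hs : s.Nonempty)
    {P : F[X]} (hP : P.natDegree ≤ #s) :
    ∑ i ∈ s, nodalWeight s v i * P.eval (v i) =
      P.coeff (#s - 1) + P.coeff #s * ∑ i ∈ s, v i := by
  set R := P - C (P.coeff #s) * nodal s v
  have hR : R.degree < #s := by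
    have hlead : (nodal s v).coeff #s = 1 := by
      simpa [natDegree_nodal] using (nodal_monic (s := s) (v := v)).coeff_natDegree
    refine degree_lt_iff_coeff_zero _ _ |>.mpr fun j hj => ?_
    replace hj : #s ≤ j := by exact_mod_cast hj
    rcases hj.eq_or_lt with rfl | hlt
    · simp [R, hlead]
    · have hPj : P.coeff j = 0 := coeff_eq_zero_of_natDegree_lt (hP.trans_lt hlt)
      have hnj : (nodal s v).coeff j = 0 :=
        coeff_eq_zero_of_natDegree_lt (by rwa [natDegree_nodal])
      simp [R, hPj, hnj]
  have heval : ∀ i ∈ s, R.eval (v i) = P.eval (v i) := fun i hi => by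
    simp [R, eval_nodal_at_node hi]
  rw [← sum_congr rfl fun i hi => congrArg _ (heval i hi),
    sum_nodalWeight_mul_eval_of_degree_lt hvs hR, coeff_sub, coeff_C_mul,
    coeff_card_pred_nodal hs]
  ring

end Lagrange

namespace Polynomial

theorem coeff_mul_of_natDegree_le_succ {R : Type*} [CommSemiring R] {p q : R[X]} {k m : ℕ}
    (hp : p.natDegree ≤ k + 1) (hq : q.natDegree ≤ m + 1) :
    (p * q).coeff (k + m + 1) = p.coeff k * q.coeff (m + 1) + p.coeff (k + 1) * q.coeff m := by
  rw [coeff_mul, Finset.sum_eq_add (k, m + 1) (k + 1, m) (by simp)]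
  · rintro ⟨i, j⟩ hij hne
    rw [HasAntidiagonal.mem_antidiagonal] at hij
    rcases Nat.lt_or_ge (k + 1) i with hi | hi
    · rw [coeff_eq_zero_of_natDegree_lt (hp.trans_lt hi), zero_mul]
    · rw [coeff_eq_zero_of_natDegree_lt (hq.trans_lt (by grind)), mul_zero]
  all_goals exact fun h => (h (HasAntidiagonal.mem_antidiagonal.mpr (by ring))).elim

end Polynomial

section TwistedCode

variable {F : Type*} [Field F]

def twistedPoly (k : ℕ) (η : F) : (ℕ → F) →ₗ[F] F[X] :=
  ∑ j ∈ range k, (monomial j).comp (LinearMap.proj j) +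
    η • (monomial k).comp (LinearMap.proj (k - 1))

theorem twistedPoly_apply (k : ℕ) (η : F) (a : ℕ → F) :
    twistedPoly k η a = ∑ j ∈ range k, monomial j (a j) + monomial k (η * a (k - 1)) := by
  simp [twistedPoly, LinearMap.sum_apply, smul_monomial]

theorem eval_twistedPoly (k : ℕ) (η : F) (a : ℕ → F) (x : F) :
    (twistedPoly k η a).eval x = ∑ j ∈ range k, a j * x ^ j + η * a (k - 1) * x ^ k := by
  simp [twistedPoly_apply, eval_finsetSum]

theorem coeff_twistedPoly_of_lt {k j : ℕ} (η : F) (a : ℕ → F) (hj : j < k) :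
    (twistedPoly k η a).coeff j = a j := by
  simp [twistedPoly_apply, coeff_monomial, hj, hj.ne']

theorem coeff_twistedPoly_self (k : ℕ) (η : F) (a : ℕ → F) :
    (twistedPoly k η a).coeff k = η * a (k - 1) := by
  simp [twistedPoly_apply, coeff_monomial]

theorem natDegree_twistedPoly_le (k : ℕ) (η : F) (a : ℕ → F) :
    (twistedPoly k η a).natDegree ≤ k := by
  rw [twistedPoly_apply]
  refine natDegree_add_le_of_degree_le (natDegree_sum_le_of_forall_le _ _ fun j hj => ?_)
    (natDegree_monomial_le _)
  exact (natDegree_monomial_le _).trans (mem_range.mp hj).le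

theorem twistedPoly_congr {k : ℕ} (hk : 1 ≤ k) (η : F) {a b : ℕ → F}
    (h : ∀ j < k, a j = b j) : twistedPoly k η a = twistedPoly k η b := by
  simp only [twistedPoly_apply, h (k - 1) (by omega)]
  congr 1
  exact sum_congr rfl fun j hj => by rw [h j (mem_range.mp hj)]

theorem coeff_twistedPoly_mul_twistedPoly_neg {k m : ℕ} (hk : 1 ≤ k) (hm : 1 ≤ m) (η : F)
    (a b : ℕ → F) : (twistedPoly k η a * twistedPoly m (-η) b).coeff (k + m - 1) = 0 := by
  obtain ⟨k, rfl⟩ := Nat.exists_eq_add_of_le' hk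
  obtain ⟨m, rfl⟩ := Nat.exists_eq_add_of_le' hm
  rw [show k + 1 + (m + 1) - 1 = k + m + 1 by omega,
    coeff_mul_of_natDegree_le_succ (natDegree_twistedPoly_le _ _ _)
      (natDegree_twistedPoly_le _ _ _),
    coeff_twistedPoly_of_lt _ _ k.lt_succ_self, coeff_twistedPoly_self,
    coeff_twistedPoly_self, coeff_twistedPoly_of_lt _ _ m.lt_succ_self]
  simp only [Nat.add_sub_cancel]
  ring

variable {n : ℕ}

theorem dualCode_eq_of_finrank_add {C D : Submodule F (Fin n → F)}
    (hDC : ∀ d ∈ D, ∀ c ∈ C, ∑ i, d i * c i = 0)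
    (hdim : Module.finrank F C + Module.finrank F D = n) :
    dualCode (C : Set (Fin n → F)) = D := by
  set D' := C.dualAnnihilator.comap (dotProductEquiv F (Fin n)).toLinearMap
  have hdual : dualCode (C : Set (Fin n → F)) = D' := by
    ext x
    simp [dualCode, D', Submodule.mem_dualAnnihilator, dotProduct]
  have hle : D ≤ D' := fun d hd => by
    rw [← SetLike.mem_coe, ← hdual]
    exact hDC d hd
  have hfinrank : Module.finrank F D' = n - Module.finrank F C := by
    have := Subspace.finrank_add_finrank_dualAnnihilator_eq C
    rw [show D' = _ from Submodule.comap_equiv_eq_map_symm _ _, LinearEquiv.finrank_map_eq]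
    simp only [Module.finrank_fin_fun] at this
    omega
  rw [hdual, Submodule.eq_of_le_of_finrank_eq hle (by omega)]

def weightedEval (α w : Fin n → F) : F[X] →ₗ[F] (Fin n → F) :=
  LinearMap.pi fun i => w i • leval (α i)

theorem weightedEval_apply (α w : Fin n → F) (p : F[X]) (i : Fin n) :
    weightedEval α w p i = w i * p.eval (α i) := by
  simp [weightedEval]

theorem eq_zero_of_weightedEval_eq_zero {α w : Fin n → F} (hα : Function.Injective α)
    (hw : ∀ i, w i ≠ 0) {p : F[X]} (hp : p.natDegree < n) (h : weightedEval α w p = 0) :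
    p = 0 :=
  eq_zero_of_natDegree_lt_card_of_eval_eq_zero p hα
    (fun i => (mul_eq_zero.mp (congrFun h i)).resolve_left (hw i)) (by simpa using hp)

def twistedCode (α w : Fin n → F) (k : ℕ) (η : F) : Submodule F (Fin n → F) :=
  LinearMap.range ((weightedEval α w).comp (twistedPoly k η))

theorem coe_twistedCode (α w : Fin n → F) (k : ℕ) (η : F) :
    (twistedCode α w k η : Set (Fin n → F)) = {c | ∃ a : ℕ → F, c = fun i =>
      w i * ((∑ j ∈ Finset.range k, a j * α i ^ j) + η * a (k - 1) * α i ^ k)} := by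
  ext c
  simp [twistedCode, funext_iff, weightedEval_apply, eval_twistedPoly, eq_comm]

/-- Only `a 0, …, a (k - 1)` enter the twisted polynomial, so extending by zero from `Fin k`
already reaches the whole code, and injectively. -/
theorem finrank_twistedCode {α w : Fin n → F} (hα : Function.Injective α)
    (hw : ∀ i, w i ≠ 0) {k : ℕ} (hk : 1 ≤ k) (hkn : k < n) (η : F) :
    Module.finrank F (twistedCode α w k η) = k := by
  set L := (weightedEval α w).comp (twistedPoly k η)
  set E := Function.ExtendByZero.linearMap F (Fin.val : Fin k → ℕ)
  have hE : ∀ (a : Fin k → F) (j : Fin k), E a j = a j := fun a j =>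
    Fin.val_injective.extend_apply a 0 j
  have hrange : twistedCode α w k η = LinearMap.range (L.comp E) := by
    refine le_antisymm ?_ (LinearMap.range_comp_le_range _ _)
    rintro _ ⟨a, rfl⟩
    refine ⟨fun j => a j, ?_⟩
    simp only [L, LinearMap.comp_apply]
    rw [twistedPoly_congr hk η fun j hj => hE _ ⟨j, hj⟩]
  have hinj : Function.Injective (L.comp E) := by
    refine (injective_iff_map_eq_zero _).mpr fun a h => funext fun j => ?_
    have hp := eq_zero_of_weightedEval_eq_zero hα hw
      ((natDegree_twistedPoly_le k η _).trans_lt hkn) h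
    simpa [coeff_twistedPoly_of_lt η _ j.isLt, hE] using congrArg (coeff · j) hp
  rw [hrange, LinearMap.finrank_range_of_inj hinj, Module.finrank_fin_fun]

open Lagrange in
theorem sum_mul_eq_zero_of_mem_twistedCode {α v : Fin n → F} (hα : Function.Injective α)
    (hv : ∀ i, v i ≠ 0) (ha : ∑ i, α i = 0) {k m : ℕ} (hk : 1 ≤ k) (hm : 1 ≤ m)
    (hkm : k + m = n) (η : F) :
    ∀ d ∈ twistedCode α (fun i => nodalWeight univ α i / v i) m (-η),
      ∀ c ∈ twistedCode α v k η, ∑ i, d i * c i = 0 := by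
  rintro _ ⟨b, rfl⟩ _ ⟨a, rfl⟩
  set P := twistedPoly k η a * twistedPoly m (-η) b
  have hP : P.natDegree ≤ #(univ : Finset (Fin n)) := by
    rw [card_univ, Fintype.card_fin, ← hkm]
    exact natDegree_mul_le_of_le (natDegree_twistedPoly_le _ _ _)
      (natDegree_twistedPoly_le _ _ _)
  have hne : (univ : Finset (Fin n)).Nonempty := univ_nonempty_iff.mpr ⟨⟨0, by omega⟩⟩
  calc ∑ i, _ = ∑ i, nodalWeight univ α i * P.eval (α i) := by
        refine sum_congr rfl fun i _ => ?_
        simp only [LinearMap.comp_apply, weightedEval_apply, P, eval_mul]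
        field_simp [hv i]
    _ = P.coeff (n - 1) + P.coeff n * ∑ i, α i := by
        simpa using sum_nodalWeight_mul_eval_of_natDegree_le hα.injOn hne hP
    _ = 0 := by
        rw [ha, mul_zero, add_zero, ← hkm, coeff_twistedPoly_mul_twistedPoly_neg hk hm]

end TwistedCode

theorem tgrs_dual_case_a_eq_zero_general (F : Type*) [Field F] (n k : ℕ)
    (hk : 1 ≤ k) (hkn : k ≤ n - k)
    (α v : Fin n → F) (hα : Function.Injective α) (hv : ∀ i, v i ≠ 0)
    (η : F)
    (u : Fin n → F) (hu : ∀ i, u i = ∏ j ∈ Finset.univ.erase i, (α i - α j)⁻¹)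
    (ha : ∑ i, α i = 0) :
    dualCode (TGRSCode F n k α v η) =
      {x : Fin n → F | ∃ b : ℕ → F, x = fun i =>
        (u i / v i) * ((∑ j ∈ Finset.range (n - k), b j * α i ^ j)
          - η * b (n - k - 1) * α i ^ (n - k))} := by
  obtain rfl : u = Lagrange.nodalWeight univ α := funext hu
  set w := fun i => Lagrange.nodalWeight univ α i / v i
  have hw : ∀ i, w i ≠ 0 := fun i =>
    div_ne_zero (Lagrange.nodalWeight_ne_zero hα.injOn (mem_univ i)) (hv i)
  have hcode : TGRSCode F n k α v η = twistedCode α v k η := (coe_twistedCode α v k η).symm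
  have htarget : {x : Fin n → F | ∃ b : ℕ → F, x = fun i =>
      w i * ((∑ j ∈ Finset.range (n - k), b j * α i ^ j)
        - η * b (n - k - 1) * α i ^ (n - k))} = twistedCode α w (n - k) (-η) := by
    simp only [coe_twistedCode, neg_mul, ← sub_eq_add_neg]
  rw [hcode, htarget]
  refine dualCode_eq_of_finrank_add
    (sum_mul_eq_zero_of_mem_twistedCode hα hv ha hk (by omega) (by omega) η) ?_
  rw [finrank_twistedCode hα hv hk (by omega), finrank_twistedCode hα hw (by omega) (by omega)]
  omega

/-- for a TGRS code with `a := Σ α_i = 0` and `η ≠ 0`, the dual code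
is the evaluation code of the twisted polynomials
`g(x) = Σ_{j<n-k} b_j x^j - η b_{n-k-1} x^{n-k}` with multipliers `u_i / v_i`. -/
theorem tgrs_dual_case_a_eq_zero (F : Type*) [Field F] [Fintype F] (n k : ℕ)
    (hk : 1 ≤ k) (hkn : k ≤ n - k)
    (α v : Fin n → F) (hα : Function.Injective α) (hv : ∀ i, v i ≠ 0)
    (η : F) (hη : η ≠ 0)
    (u : Fin n → F) (hu : ∀ i, u i = ∏ j ∈ Finset.univ.erase i, (α i - α j)⁻¹)
    (ha : ∑ i, α i = 0) :
    dualCode (TGRSCode F n k α v η) =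
      {x : Fin n → F | ∃ b : ℕ → F, x = fun i =>
        (u i / v i) * ((∑ j ∈ Finset.range (n - k), b j * α i ^ j)
          - η * b (n - k - 1) * α i ^ (n - k))} :=
  tgrs_dual_case_a_eq_zero_general F n k hk hkn α v hα hv η u hu ha
end
end

section
/- Let F be a finite field of odd characteristic, n = 2k with k ≥ 3, and C_k(α,v,η) a TGRS code of length n and dimension k. Set u_i := ∏_{j≠i}(α_i − α_j)^{−1} and a := Σ_{i=1}^n α_i, and suppose a ≠ 0 and η ≠ −a^{−1}. Then C_k(α,v,η) is self-dual if and only if both of the following hold: (1) there exists λ ∈ F\{0} such that v_i² = λ·u_i for all 1 ≤ i ≤ n; (2) 2 + aη = 0. -/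
open Finset Polynomial

noncomputable section

/-! The code is the row space of a `k × 2k` generator matrix `G` of full rank, so it is self-dual
iff `G Gᵀ = 0`. The entries of `G Gᵀ` are combinations of the power sums `W m = ∑ v_i² α_i ^ m`;
as `η ≠ 0` and `k ≥ 3`, they all vanish iff `W m = 0` for `m ≤ 2k - 2` and
`2 W (2k - 1) + η W (2k) = 0`. By Lagrange interpolation `∑ u_i p(α_i)` is the coefficient of
`X ^ (n - 1)` in `p` whenever `deg p < n`, so the vanishing of the low power sums says exactly that
`v_i² = λ u_i` with `λ = W (2k - 1)`, which is nonzero as the `v_i` are; then `W (2k) = λ a`, and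
the last condition becomes `λ (2 + a η) = 0`. -/

open scoped Matrix

section Moments

variable {F : Type*} [Field F] {n : ℕ} {α : Fin n → F}

open Lagrange

theorem sum_nodalWeight_mul_eval (hα : Function.Injective α) {p : F[X]}
    (hp : p.degree < n) :
    ∑ i, nodalWeight univ α i * p.eval (α i) = p.coeff (n - 1) := by
  have h := coeff_eq_sum (s := univ) hα.injOn (by simpa using hp)
  simp only [card_univ, Fintype.card_fin] at h
  rw [h]
  refine sum_congr rfl fun i _ => ?_
  rw [nodalWeight, prod_inv_distrib, div_eq_mul_inv, mul_comm]

theorem sum_nodalWeight_mul_pow (hα : Function.Injective α) {m : ℕ} (hm : m < n) :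
    ∑ i, nodalWeight univ α i * α i ^ m = if m = n - 1 then 1 else 0 := by
  have h := sum_nodalWeight_mul_eval hα (p := X ^ m) (by rw [degree_X_pow]; exact_mod_cast hm)
  simp only [eval_pow, eval_X, coeff_X_pow] at h
  rw [h]
  exact if_congr eq_comm rfl rfl

theorem sum_nodalWeight_mul_pow_card (hα : Function.Injective α) (hn : 0 < n) :
    ∑ i, nodalWeight univ α i * α i ^ n = ∑ i, α i := by
  have hcard : #(univ : Finset (Fin n)) = n := by simp
  -- `X ^ n - nodal` agrees with `X ^ n` on the nodes and has degree `< n`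
  set p : F[X] := X ^ n - nodal univ α
  have hp : p.degree < n := by
    have := degree_sub_lt_left (p := X ^ n) (q := nodal univ α)
      (by rw [degree_X_pow, degree_nodal, hcard]) (pow_ne_zero n X_ne_zero)
      (by rw [leadingCoeff_X_pow, nodal_monic.leadingCoeff])
    rwa [degree_X_pow] at this
  have h := sum_nodalWeight_mul_eval hα hp
  simp only [p, eval_sub, eval_pow, eval_X, eval_nodal_at_node (mem_univ _), sub_zero] at h
  have hcoeff := prod_X_sub_C_coeff_card_pred (univ : Finset (Fin n)) α (by rwa [hcard])
  rw [hcard] at hcoeff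
  rw [h, coeff_sub, coeff_X_pow, if_neg (by omega), nodal_eq, hcoeff, zero_sub, neg_neg]

theorem eq_zero_of_forall_sum_mul_pow_eq_zero (hα : Function.Injective α) {w : Fin n → F}
    (hw : ∀ m < n, ∑ i, w i * α i ^ m = 0) : w = 0 := by
  refine Matrix.eq_zero_of_vecMul_eq_zero (Matrix.det_vandermonde_ne_zero_iff.mpr hα) ?_
  funext m
  simpa [Matrix.vecMul, dotProduct, Matrix.vandermonde] using hw m m.isLt

theorem exists_eq_mul_nodalWeight_iff (hα : Function.Injective α) {w : Fin n → F} :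
    (∃ c, ∀ i, w i = c * nodalWeight univ α i) ↔ ∀ m < n - 1, ∑ i, w i * α i ^ m = 0 := by
  constructor
  · rintro ⟨c, hc⟩ m hm
    simp_rw [hc, mul_assoc, ← mul_sum, sum_nodalWeight_mul_pow hα (by omega : m < n),
      if_neg (by omega : m ≠ n - 1), mul_zero]
  · intro hw
    set c := ∑ i, w i * α i ^ (n - 1)
    have hmoments : ∀ m < n, ∑ i, (w i - c * nodalWeight univ α i) * α i ^ m = 0 := by
      intro m hm
      simp_rw [sub_mul, sum_sub_distrib, mul_assoc, ← mul_sum, sum_nodalWeight_mul_pow hα hm]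
      split_ifs with hmn
      · rw [hmn, mul_one, sub_self]
      · rw [hw m (by omega), mul_zero, sub_zero]
    refine ⟨c, fun i => sub_eq_zero.mp ?_⟩
    exact congrFun (eq_zero_of_forall_sum_mul_pow_eq_zero hα hmoments) i

theorem sum_mul_pow_of_eq_mul_nodalWeight (hα : Function.Injective α) (hn : 0 < n)
    {w : Fin n → F} {c : F} (hw : ∀ i, w i = c * nodalWeight univ α i) :
    ∑ i, w i * α i ^ (n - 1) = c ∧ ∑ i, w i * α i ^ n = c * ∑ i, α i := by
  simp_rw [hw, mul_assoc, ← mul_sum]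
  rw [sum_nodalWeight_mul_pow hα (by omega), if_pos rfl, mul_one,
    sum_nodalWeight_mul_pow_card hα hn]
  exact ⟨rfl, rfl⟩

end Moments

section SelfDual

variable {F : Type*} [Field F] {κ : Type*} [Fintype κ] {n : ℕ}

theorem dualCode_range_transpose_mulVecLin (G : Matrix κ (Fin n) F) :
    dualCode (LinearMap.range Gᵀ.mulVecLin : Set (Fin n → F)) = LinearMap.ker G.mulVecLin := by
  ext x
  simp only [dualCode, SetLike.mem_coe, LinearMap.mem_range, LinearMap.mem_ker,
    Matrix.mulVecLin_apply, forall_exists_index, forall_apply_eq_imp_iff, Set.mem_ofPred_eq]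
  have hdot : ∀ b, ∑ i, x i * (Gᵀ *ᵥ b) i = (G *ᵥ x) ⬝ᵥ b := fun b => by
    change x ⬝ᵥ (Gᵀ *ᵥ b) = _
    rw [Matrix.dotProduct_mulVec, Matrix.vecMul_transpose]
  simp_rw [hdot, dotProduct_eq_zero_iff]

theorem finrank_ker_mulVecLin_of_injective (G : Matrix κ (Fin n) F)
    (hG : Function.Injective Gᵀ.mulVecLin) :
    Module.finrank F (LinearMap.ker G.mulVecLin) = n - Fintype.card κ := by
  have hrank : G.rank = Fintype.card κ := by
    rw [← Matrix.rank_transpose, Matrix.rank, LinearMap.finrank_range_of_inj hG,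
      Module.finrank_fintype_fun_eq_card]
  have h := LinearMap.finrank_range_add_finrank_ker G.mulVecLin
  rw [← Matrix.rank, hrank, Module.finrank_fin_fun] at h
  omega

theorem isSelfDual_range_transpose_mulVecLin_iff (G : Matrix κ (Fin n) F)
    (hG : Function.Injective Gᵀ.mulVecLin) (hn : n = 2 * Fintype.card κ) :
    IsSelfDual (LinearMap.range Gᵀ.mulVecLin : Set (Fin n → F)) ↔ G * Gᵀ = 0 := by
  have hfinrank : Module.finrank F (LinearMap.range Gᵀ.mulVecLin)
      = Module.finrank F (LinearMap.ker G.mulVecLin) := by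
    rw [finrank_ker_mulVecLin_of_injective G hG, LinearMap.finrank_range_of_inj hG,
      Module.finrank_fintype_fun_eq_card]
    omega
  rw [IsSelfDual, dualCode_range_transpose_mulVecLin, SetLike.coe_set_eq]
  calc LinearMap.range Gᵀ.mulVecLin = LinearMap.ker G.mulVecLin
      ↔ LinearMap.range Gᵀ.mulVecLin ≤ LinearMap.ker G.mulVecLin :=
        ⟨le_of_eq, fun h => Submodule.eq_of_le_of_finrank_eq h hfinrank⟩
    _ ↔ (G * Gᵀ).mulVecLin = 0 := by rw [LinearMap.range_le_ker_iff, Matrix.mulVecLin_mul]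
    _ ↔ G * Gᵀ = 0 := by
        classical
        rw [← Matrix.toLin'_apply', LinearEquiv.map_eq_zero_iff]

end SelfDual

section TGRS

variable {F : Type*} [Field F] {n k : ℕ} {α v : Fin n → F} {η : F}

def hookTwist (k : ℕ) (η : F) (j : ℕ) : F :=
  if j = k - 1 then η else 0

def tgrsGeneratorMatrix (k : ℕ) (α v : Fin n → F) (η : F) : Matrix (Fin k) (Fin n) F :=
  Matrix.of fun j i => v i * (α i ^ (j : ℕ) + hookTwist k η j * α i ^ k)

def twistedHankel (k : ℕ) (η : F) (W : ℕ → F) (p q : ℕ) : F :=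
  W (p + q) + hookTwist k η q * W (p + k) + hookTwist k η p * W (q + k)
    + hookTwist k η p * hookTwist k η q * W (k + k)

theorem tgrsGeneratorMatrix_transpose_mulVec (hk : 0 < k) (a : ℕ → F) (i : Fin n) :
    ((tgrsGeneratorMatrix k α v η)ᵀ *ᵥ fun j => a j) i
      = v i * ((∑ j ∈ range k, a j * α i ^ j) + η * a (k - 1) * α i ^ k) := by
  simp only [Matrix.mulVec, dotProduct, Matrix.transpose_apply, tgrsGeneratorMatrix,
    Matrix.of_apply]
  rw [Fin.sum_univ_eq_sum_range (fun j => v i * (α i ^ j + hookTwist k η j * α i ^ k) * a j) k]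
  simp only [hookTwist, mul_add, add_mul, sum_add_distrib, ite_mul, mul_ite, mul_zero, zero_mul,
    sum_ite_eq', mem_range, Nat.sub_lt hk one_pos, if_true, mul_sum]
  congr 1
  · exact sum_congr rfl fun j _ => by ring
  · ring

theorem tgrsCode_eq_range (hk : 0 < k) :
    TGRSCode F n k α v η = LinearMap.range (tgrsGeneratorMatrix k α v η)ᵀ.mulVecLin := by
  ext c
  simp only [TGRSCode, Set.mem_ofPred_eq, SetLike.mem_coe, LinearMap.mem_range,
    Matrix.mulVecLin_apply]
  constructor
  · rintro ⟨a, rfl⟩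
    exact ⟨fun j => a j, funext (tgrsGeneratorMatrix_transpose_mulVec hk a)⟩
  · rintro ⟨b, rfl⟩
    refine ⟨fun m => if h : m < k then b ⟨m, h⟩ else 0, funext fun i => ?_⟩
    rw [← tgrsGeneratorMatrix_transpose_mulVec hk]
    simp

theorem injective_tgrsGeneratorMatrix_transpose_mulVecLin (hk : 0 < k) (hkn : k < n)
    (hα : Function.Injective α) (hv : ∀ i, v i ≠ 0) :
    Function.Injective (tgrsGeneratorMatrix k α v η)ᵀ.mulVecLin := by
  rw [injective_iff_map_eq_zero]
  intro b hb
  set a : ℕ → F := fun m => if h : m < k then b ⟨m, h⟩ else 0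
  have hab : b = fun j : Fin k => a j := by simp [a]
  -- a codeword `v i * f (α i)` vanishing everywhere forces `f = 0`, as `deg f ≤ k < n`
  set p : F[X] := ∑ j ∈ range k, C (a j) * X ^ j + C (η * a (k - 1)) * X ^ k
  have hroots : ∀ i, p.eval (α i) = 0 := fun i => by
    have h := congrFun hb i
    rw [Matrix.mulVecLin_apply, hab, tgrsGeneratorMatrix_transpose_mulVec hk] at h
    simpa [p, eval_finsetSum, hv i, mul_assoc] using h
  have hdeg : p.natDegree < Fintype.card (Fin n) := by
    refine lt_of_le_of_lt ?_ (by simpa using hkn)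
    refine natDegree_add_le_of_degree_le ?_ (natDegree_C_mul_X_pow_le _ _)
    refine natDegree_sum_le_of_forall_le _ _ fun j hj => ?_
    exact (natDegree_C_mul_X_pow_le _ _).trans (mem_range.mp hj).le
  have hp := eq_zero_of_natDegree_lt_card_of_eval_eq_zero p hα hroots hdeg
  funext j
  have h := congrArg (coeff · (j : ℕ)) hp
  simpa [p, finsetSum_coeff, coeff_X_pow, j.isLt.ne, a] using h

theorem tgrsGeneratorMatrix_mul_transpose_eq_zero_iff :
    tgrsGeneratorMatrix k α v η * (tgrsGeneratorMatrix k α v η)ᵀ = 0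
      ↔ ∀ p < k, ∀ q < k, twistedHankel k η (fun m => ∑ i, v i ^ 2 * α i ^ m) p q = 0 := by
  have hentry : ∀ j j' : Fin k,
      (tgrsGeneratorMatrix k α v η * (tgrsGeneratorMatrix k α v η)ᵀ) j j'
        = twistedHankel k η (fun m => ∑ i, v i ^ 2 * α i ^ m) j j' := fun j j' => by
    simp only [Matrix.mul_apply, Matrix.transpose_apply, tgrsGeneratorMatrix, Matrix.of_apply,
      twistedHankel, mul_sum, ← sum_add_distrib]
    exact sum_congr rfl fun i _ => by ring
  simp [← Matrix.ext_iff, hentry, Fin.forall_iff]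

theorem forall_twistedHankel_eq_zero_iff (hk : 3 ≤ k) (hη : η ≠ 0) (W : ℕ → F) :
    (∀ p < k, ∀ q < k, twistedHankel k η W p q = 0)
      ↔ (∀ m < 2 * k - 1, W m = 0) ∧ 2 * W (2 * k - 1) + η * W (2 * k) = 0 := by
  have hhook : ∀ p, p ≠ k - 1 → hookTwist k η p = 0 := fun p hp => if_neg hp
  have hhook' : hookTwist k η (k - 1) = η := if_pos rfl
  constructor
  · intro h
    have hlow : ∀ m < 2 * k - 1, W m = 0 := by
      intro m
      induction m using Nat.strong_induction_on with
      | _ m ih =>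
        intro hm
        by_cases hsmall : m ≤ 2 * (k - 2)
        · have hpq := h (min m (k - 2)) (by omega) (m - min m (k - 2)) (by omega)
          rw [twistedHankel, hhook _ (by omega), hhook _ (by omega),
            show min m (k - 2) + (m - min m (k - 2)) = m by omega] at hpq
          simpa using hpq
        -- here `k ≤ m`, and the entry `(k - 1, m - k)` reads `W (m - 1) + η * W m = 0`
        · have hpq := h (k - 1) (by omega) (m - k) (by omega)
          rw [twistedHankel, hhook _ (by omega), hhook', show k - 1 + (m - k) = m - 1 by omega,
            show m - k + k = m by omega, ih (m - 1) (by omega) (by omega)] at hpq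
          simpa [hη] using hpq
    refine ⟨hlow, ?_⟩
    have htop := h (k - 1) (by omega) (k - 1) (by omega)
    rw [twistedHankel, hhook', show k - 1 + (k - 1) = 2 * k - 2 by omega,
      show k - 1 + k = 2 * k - 1 by omega, show k + k = 2 * k by omega,
      hlow _ (by omega)] at htop
    have : η * (2 * W (2 * k - 1) + η * W (2 * k)) = 0 := by linear_combination htop
    exact (mul_eq_zero.mp this).resolve_left hη
  · rintro ⟨hlow, htop⟩ p hp q hq
    rw [twistedHankel, hlow _ (by omega)]
    by_cases hpk : p = k - 1 <;> by_cases hqk : q = k - 1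
    · rw [hpk, hqk, hhook', show k - 1 + k = 2 * k - 1 by omega, show k + k = 2 * k by omega]
      linear_combination η * htop
    · rw [hhook q hqk, hpk, hlow (q + k) (by omega)]
      ring
    · rw [hhook p hpk, hqk, hlow (p + k) (by omega)]
      ring
    · simp [hhook q hqk, hhook p hpk]

end TGRS

theorem tgrs_selfdual_iff_general (F : Type*) [Field F]
    (n k : ℕ) (hk : 3 ≤ k) (hn : n = 2 * k)
    (α v : Fin n → F) (hα : Function.Injective α) (hv : ∀ i, v i ≠ 0)
    (η : F) (hη : η ≠ 0)
    (u : Fin n → F) (hu : ∀ i, u i = ∏ j ∈ Finset.univ.erase i, (α i - α j)⁻¹)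
    (a : F) (ha : a = ∑ i, α i) :
    IsSelfDual (TGRSCode F n k α v η) ↔
      ((∃ lam : F, lam ≠ 0 ∧ ∀ i, v i ^ 2 = lam * u i) ∧ 2 + a * η = 0) := by
  subst hn ha
  obtain rfl : u = Lagrange.nodalWeight univ α := funext hu
  rw [tgrsCode_eq_range (by omega), isSelfDual_range_transpose_mulVecLin_iff _
    (injective_tgrsGeneratorMatrix_transpose_mulVecLin (by omega) (by omega) hα hv) (by simp),
    tgrsGeneratorMatrix_mul_transpose_eq_zero_iff, forall_twistedHankel_eq_zero_iff hk hη, ← exists_eq_mul_nodalWeight_iff hα]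
  constructor
  · rintro ⟨⟨lam, hlam⟩, htop⟩
    obtain ⟨hodd, heven⟩ := sum_mul_pow_of_eq_mul_nodalWeight hα (by omega) hlam
    have hlam0 : lam ≠ 0 := fun h0 => hv ⟨0, by omega⟩ (by simpa [h0] using hlam ⟨0, by omega⟩)
    refine ⟨⟨lam, hlam0, hlam⟩, ?_⟩
    rw [hodd, heven] at htop
    have : lam * (2 + (∑ i, α i) * η) = 0 := by linear_combination htop
    exact (mul_eq_zero.mp this).resolve_left hlam0
  · rintro ⟨⟨lam, -, hlam⟩, htwist⟩
    obtain ⟨hodd, heven⟩ := sum_mul_pow_of_eq_mul_nodalWeight hα (by omega) hlam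
    refine ⟨⟨lam, hlam⟩, ?_⟩
    rw [hodd, heven]
    linear_combination lam * htwist

/-- for `n = 2k`, `k ≥ 3`, `a := Σ α_i ≠ 0` and `η ≠ -a⁻¹`, the TGRS code
is self-dual iff (1) there is `λ ≠ 0` with `v_i² = λ u_i` for all `i`, and
(2) `2 + aη = 0`. -/
theorem tgrs_selfdual_iff (F : Type*) [Field F] [Fintype F] (hchar : ringChar F ≠ 2)
    (n k : ℕ) (hk : 3 ≤ k) (hn : n = 2 * k)
    (α v : Fin n → F) (hα : Function.Injective α) (hv : ∀ i, v i ≠ 0)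
    (η : F) (hη : η ≠ 0)
    (u : Fin n → F) (hu : ∀ i, u i = ∏ j ∈ Finset.univ.erase i, (α i - α j)⁻¹)
    (a : F) (ha : a = ∑ i, α i) (ha0 : a ≠ 0) (hηa : η ≠ -a⁻¹) :
    IsSelfDual (TGRSCode F n k α v η) ↔
      ((∃ lam : F, lam ≠ 0 ∧ ∀ i, v i ^ 2 = lam * u i) ∧ 2 + a * η = 0) :=
  tgrs_selfdual_iff_general F n k hk hn α v hα hv η hη u hu a ha
end
end

section
/- Let p > 3 be a prime and F a finite field of characteristic p over which m(x) = x^{2p} − x^{2p−1} + 2x^{p+1} + 3^{−1}x^3 + 1 splits completely with roots α_1,…,α_{2p}, assume gcd(m'(x), x^4 − (3 − 3^{−1})x^3 + 1) = 1 in F_p[x], and set v_i := (α_i^{p−1} + α_i)^{−1} and η := −2. If Σ_{i∈I} α_i ≠ 1/2 for every subset I ⊆ {1,…,2p} with |I| = p, then C_p(α,v,η) is a self-dual MDS code of length 2p over F; otherwise C_p(α,v,η) is a self-dual NMDS code of length 2p over F. -/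
/-!
In characteristic `p` we have `m' = (x^{p-1} + x)^2`, and at a root `β` of `m'` (where
`β^{p-1} = -β`) the value `m(β)` equals the value at `β` of the quartic of the gcd condition. So
that condition makes the roots `α_i` of `m` distinct, and `v_i^2 = 1 / m'(α_i)` is the Lagrange
nodal weight at `α_i`. For `h` of degree `≤ 2p`, Lagrange interpolation gives
`Σ_i h(α_i) / m'(α_i) = h_{2p-1} + h_{2p} Σ_i α_i`, and `Σ_i α_i = 1` is read off from `m`. For two
twisted polynomials `f`, `f'` (degree `≤ p`, `f_p = η f_{p-1}`), `h = f f'` gives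
`η f_{p-1} f'_{p-1} (2 + η)`, which vanishes for `η = -2`; as the code has dimension `p`, it is
self-dual.

A nonzero twisted polynomial vanishes at no more than `p` of the `α_i`. If it vanishes exactly on a
set `I` of `p` of them, it is a multiple of `∏_{i ∈ I} (x - α_i)`, whose coefficients satisfy the
twist condition exactly when `Σ_{i ∈ I} α_i = 1/2`. Together with the Singleton bound, this gives
minimum distance `p + 1` or `p`.
-/

open Finset Polynomial

noncomputable section

namespace Polynomial

theorem coeff_mul_add_add_one {R : Type*} [Semiring R] {m n : ℕ} {f g : R[X]}
    (hf : f.natDegree ≤ m + 1) (hg : g.natDegree ≤ n + 1) :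
    (f * g).coeff (m + n + 1) = f.coeff m * g.coeff (n + 1) + f.coeff (m + 1) * g.coeff n := by
  rw [coeff_mul, Finset.sum_eq_add_of_mem (m, n + 1) (m + 1, n) (by simp; omega) (by simp; omega)
    (by simp)]
  rintro ⟨i, j⟩ hij ⟨hne, hne'⟩
  rw [HasAntidiagonal.mem_antidiagonal] at hij
  obtain h | h := lt_or_ge (m + 1) i
  · rw [coeff_eq_zero_of_natDegree_lt (hf.trans_lt h), zero_mul]
  obtain h' | h' := lt_or_ge (n + 1) j
  · rw [coeff_eq_zero_of_natDegree_lt (hg.trans_lt h'), mul_zero]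
  simp only [ne_eq, Prod.mk.injEq] at hij hne hne'
  omega

end Polynomial

namespace Lagrange

variable {F : Type*} [Field F] {ι : Type*} {s : Finset ι} {v : ι → F}

theorem coeff_nodal_card_sub_one (hs : s.Nonempty) :
    (nodal s v).coeff (#s - 1) = -∑ i ∈ s, v i := by
  simpa [nodal] using multiset_prod_X_sub_C_coeff_card_pred (s.1.map v) (by simpa using hs.card_pos)

theorem degree_sub_C_mul_nodal_lt {f : F[X]} (hf : f.natDegree ≤ #s) :
    (f - C (f.coeff #s) * nodal s v).degree < #s := by
  rw [degree_lt_iff_coeff_zero]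
  intro j hj
  rw [coeff_sub, coeff_C_mul]
  obtain rfl | hj := hj.eq_or_lt
  · rw [← natDegree_nodal (s := s) (v := v), nodal_monic.coeff_natDegree, mul_one, sub_self]
  · have hnodal : (nodal s v).natDegree < j := by rw [natDegree_nodal]; exact hj
    rw [coeff_eq_zero_of_natDegree_lt (hf.trans_lt hj), coeff_eq_zero_of_natDegree_lt hnodal,
      mul_zero, sub_zero]

theorem eq_C_mul_nodal (hvs : Set.InjOn v s) {f : F[X]} (hf : f.natDegree ≤ #s)
    (hzero : ∀ i ∈ s, f.eval (v i) = 0) : f = C (f.coeff #s) * nodal s v := by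
  rw [← sub_eq_zero]
  refine eq_zero_of_degree_lt_of_eval_index_eq_zero s hvs (degree_sub_C_mul_nodal_lt hf)
    fun i hi => ?_
  simp [hzero i hi, eval_nodal_at_node hi]

theorem card_le_natDegree_of_eval_eq_zero (hvs : Set.InjOn v s) {f : F[X]} (hf : f ≠ 0)
    (hzero : ∀ i ∈ s, f.eval (v i) = 0) : #s ≤ f.natDegree := by
  by_contra! h
  exact hf (eq_zero_of_degree_lt_of_eval_index_eq_zero s hvs
    ((degree_le_natDegree).trans_lt (by exact_mod_cast h)) hzero)

variable [DecidableEq ι]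

theorem sum_eval_mul_nodalWeight (hvs : Set.InjOn v s) {f : F[X]} (hf : f.degree < #s) :
    ∑ i ∈ s, f.eval (v i) * nodalWeight s v i = f.coeff (#s - 1) := by
  conv_rhs => rw [eq_interpolate hvs hf, interpolate_apply, finsetSum_coeff]
  refine sum_congr rfl fun i hi => ?_
  rw [basis_eq_prod_sub_inv_mul_nodal_div hi, ← nodal_erase_eq_nodal_div hi, mul_comm, ← mul_assoc,
    ← C_mul, coeff_C_mul, mul_comm (nodalWeight s v i)]
  have hdeg : (nodal (s.erase i) v).natDegree = #s - 1 := by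
    rw [natDegree_nodal, card_erase_of_mem hi]
  rw [← hdeg, nodal_monic.coeff_natDegree, mul_one]

theorem sum_eval_mul_nodalWeight_of_natDegree_le (hvs : Set.InjOn v s) (hs : s.Nonempty)
    {f : F[X]} (hf : f.natDegree ≤ #s) :
    ∑ i ∈ s, f.eval (v i) * nodalWeight s v i =
      f.coeff (#s - 1) + f.coeff #s * ∑ i ∈ s, v i := by
  set r := f - C (f.coeff #s) * nodal s v
  have hr : r.degree < #s := degree_sub_C_mul_nodal_lt hf
  have heval : ∀ i ∈ s, f.eval (v i) = r.eval (v i) := fun i hi => by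
    simp [r, eval_nodal_at_node hi]
  rw [sum_congr rfl fun i hi => by rw [heval i hi], sum_eval_mul_nodalWeight hvs hr, coeff_sub,
    coeff_C_mul, coeff_nodal_card_sub_one hs]
  ring

theorem injective_of_eval_derivative_nodal_ne_zero [Fintype ι] {α : ι → F}
    (h : ∀ i, (derivative (nodal univ α)).eval (α i) ≠ 0) : Function.Injective α := by
  intro i j hij
  by_contra hne
  apply h i
  rw [eval_nodal_derivative_eval_node_eq (mem_univ i), eval_nodal]
  exact prod_eq_zero (mem_erase.2 ⟨Ne.symm hne, mem_univ j⟩) (by rw [hij, sub_self])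

end Lagrange

section Codes

variable {F : Type*} [Field F] {n : ℕ}

theorem hwt_eq_sub_card_zeros [DecidableEq F] (c : Fin n → F) : hwt c = n - #{i | c i = 0} := by
  rw [hwt, Set.ncard_eq_toFinset_card', Set.toFinset_ofPred, filter_not,
    card_sdiff_of_subset (filter_subset _ _), card_univ, Fintype.card_fin]

theorem hwt_le_sub_card_of_eq_zero {c : Fin n → F} {s : Finset (Fin n)} (hc : ∀ i ∈ s, c i = 0) :
    hwt c ≤ n - #s := by
  classical
  rw [hwt_eq_sub_card_zeros]
  exact Nat.sub_le_sub_left (card_le_card fun i hi => by simpa using hc i hi) n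

theorem exists_ne_zero_hwt_le (W : Submodule F (Fin n → F)) (hW : 0 < Module.finrank F W) :
    ∃ c ∈ W, c ≠ 0 ∧ hwt c ≤ n - Module.finrank F W + 1 := by
  obtain ⟨s, -, hs⟩ := exists_subset_card_eq (s := (univ : Finset (Fin n)))
    (n := Module.finrank F W - 1) (by simpa using (Submodule.finrank_le W).trans' (Nat.sub_le _ _))
  let restrict : W →ₗ[F] (s → F) := LinearMap.funLeft F F Subtype.val ∘ₗ W.subtype
  obtain ⟨⟨c, hcW⟩, hker, hc0⟩ := Submodule.exists_mem_ne_zero_of_ne_bot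
    (LinearMap.ker_ne_bot_of_finrank_lt (f := restrict) (by simp; omega))
  refine ⟨c, hcW, fun h => hc0 (by simp [h]), ?_⟩
  have := hwt_le_sub_card_of_eq_zero (c := c) (s := s) fun i hi => congrFun hker ⟨i, hi⟩
  omega

theorem dotProductBilin_nondegenerate :
    (dotProductBilin F F : LinearMap.BilinForm F (Fin n → F)).Nondegenerate :=
  ⟨fun x hx => dotProduct_eq_zero_iff.1 hx,
    fun y hy => dotProduct_eq_zero_iff.1 fun x => by
      rw [dotProduct_comm]; exact hy x⟩

theorem isSelfDual_of_two_mul_finrank_eq (W : Submodule F (Fin n → F))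
    (hW : 2 * Module.finrank F W = n)
    (horth : ∀ x ∈ W, ∀ y ∈ W, ∑ i, x i * y i = 0) : IsSelfDual (W : Set (Fin n → F)) := by
  set B : LinearMap.BilinForm F (Fin n → F) := dotProductBilin F F
  have hdual : dualCode (W : Set (Fin n → F)) = B.orthogonal W := by
    ext x
    simp only [dualCode, Set.mem_ofPred_eq, SetLike.mem_coe, LinearMap.BilinForm.mem_orthogonal_iff,
      B, dotProductBilin_apply_apply]
    exact forall₂_congr fun c _ => by rw [dotProduct_comm, dotProduct]
  have hle : W ≤ B.orthogonal W := fun x hx y hy => horth y hy x hx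
  rw [IsSelfDual, hdual]
  congr 1
  refine Submodule.eq_of_le_of_finrank_le hle ?_
  rw [LinearMap.BilinForm.finrank_orthogonal dotProductBilin_nondegenerate, Module.finrank_fin_fun]
  omega

end Codes

namespace TGRSCode

open Lagrange

variable {F : Type*} [Field F] {n k : ℕ} {α v : Fin n → F} {η : F}

def twist (k : ℕ) (η : F) : F[X] →ₗ[F] F[X] :=
  LinearMap.id + η • (monomial k).comp (lcoeff F (k - 1))

theorem twist_apply (g : F[X]) : twist k η g = g + C (η * g.coeff (k - 1)) * X ^ k := by
  rw [C_mul_X_pow_eq_monomial]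
  simp [twist, smul_monomial]

theorem coeff_twist (g : F[X]) (j : ℕ) :
    (twist k η g).coeff j = g.coeff j + if j = k then η * g.coeff (k - 1) else 0 := by
  rw [twist_apply, coeff_add, coeff_C_mul_X_pow]

theorem twist_injective (hk : 0 < k) : Function.Injective (twist k η) := by
  refine (injective_iff_map_eq_zero _).2 fun g hg => ext fun j => ?_
  have hcoeff := fun j => congrArg (coeff · j) hg
  simp only [coeff_twist, coeff_zero] at hcoeff
  have hlow : g.coeff (k - 1) = 0 := by simpa [show k - 1 ≠ k by omega] using hcoeff (k - 1)
  simpa [hlow, apply_ite] using hcoeff j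

theorem natDegree_twist_le {g : F[X]} (hg : g.degree < k) : (twist k η g).natDegree ≤ k := by
  rw [twist_apply]
  exact natDegree_add_le_of_degree_le (natDegree_le_of_degree_le hg.le)
    (natDegree_C_mul_X_pow_le _ _)

def weightedEval (α v : Fin n → F) : F[X] →ₗ[F] (Fin n → F) :=
  LinearMap.pi fun i => v i • leval (α i)

@[simp]
theorem weightedEval_apply (f : F[X]) (i : Fin n) : weightedEval α v f i = v i * f.eval (α i) :=
  rfl

def tgrsSubmodule (α v : Fin n → F) (k : ℕ) (η : F) : Submodule F (Fin n → F) :=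
  (degreeLT F k).map (weightedEval α v ∘ₗ twist k η)

theorem mem_tgrsSubmodule_iff (hk : 0 < k) {x : Fin n → F} :
    x ∈ tgrsSubmodule α v k η ↔
      ∃ f : F[X], f.natDegree ≤ k ∧ f.coeff k = η * f.coeff (k - 1) ∧ weightedEval α v f = x := by
  have hk' : k - 1 ≠ k := by omega
  constructor
  · rintro ⟨g, hg, rfl⟩
    have hgk : g.coeff k = 0 := coeff_eq_zero_of_degree_lt (mem_degreeLT.1 hg)
    exact ⟨twist k η g, natDegree_twist_le (mem_degreeLT.1 hg), by simp [coeff_twist, hgk, hk'],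
      rfl⟩
  · rintro ⟨f, hdeg, hcoeff, rfl⟩
    refine ⟨f.erase k, mem_degreeLT.2 ?_, ?_⟩
    · refine (degree_lt_iff_coeff_zero _ _).2 fun j hj => ?_
      rw [coeff_erase]
      split_ifs with hjk
      · rfl
      · exact coeff_eq_zero_of_natDegree_lt (by omega)
    · rw [LinearMap.comp_apply, twist_apply, coeff_erase, if_neg hk', ← hcoeff,
        C_mul_X_pow_eq_monomial, add_comm, monomial_add_erase]

theorem coe_tgrsSubmodule (hk : 0 < k) :
    (tgrsSubmodule α v k η : Set (Fin n → F)) = TGRSCode F n k α v η := by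
  ext x
  constructor
  · rw [SetLike.mem_coe, mem_tgrsSubmodule_iff hk]
    rintro ⟨f, hdeg, hcoeff, rfl⟩
    refine ⟨f.coeff, funext fun i => ?_⟩
    rw [weightedEval_apply, eval_eq_sum_range' (Nat.lt_succ_of_le hdeg), sum_range_succ, hcoeff]
  · rintro ⟨a, rfl⟩
    set g : F[X] := ∑ j ∈ range k, C (a j) * X ^ j
    have hg : g ∈ degreeLT F k := Submodule.sum_mem _ fun j hj =>
      mem_degreeLT.2 ((degree_C_mul_X_pow_le _ _).trans_lt (by simpa using hj))
    have hgk : g.coeff (k - 1) = a (k - 1) := by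
      simp [g, finsetSum_coeff, hk]
    refine ⟨g, hg, funext fun i => ?_⟩
    rw [LinearMap.comp_apply, weightedEval_apply, twist_apply, hgk]
    simp [g, eval_finsetSum]

theorem eq_zero_of_weightedEval_eq_zero (hα : Function.Injective α) (hv : ∀ i, v i ≠ 0)
    {f : F[X]} (hf : f.natDegree < n) (h : weightedEval α v f = 0) : f = 0 := by
  refine eq_zero_of_degree_lt_of_eval_index_eq_zero univ hα.injOn ?_
    fun i _ => (mul_eq_zero.1 (congrFun h i)).resolve_left (hv i)
  rw [card_univ, Fintype.card_fin]
  exact degree_le_natDegree.trans_lt (WithBot.coe_lt_coe.2 hf)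

theorem finrank_tgrsSubmodule (hα : Function.Injective α) (hv : ∀ i, v i ≠ 0) (hk : 0 < k)
    (hkn : k < n) : Module.finrank F (tgrsSubmodule α v k η) = k := by
  have hinj : Function.Injective ((weightedEval α v ∘ₗ twist k η) ∘ₗ (degreeLT F k).subtype) := by
    refine (injective_iff_map_eq_zero _).2 fun g hg => Subtype.ext (twist_injective (η := η) hk ?_)
    rw [Submodule.coe_zero, map_zero]
    exact eq_zero_of_weightedEval_eq_zero hα hv
      ((natDegree_twist_le (mem_degreeLT.1 g.2)).trans_lt hkn) hg
  rw [tgrsSubmodule, ← Submodule.range_subtype (degreeLT F k), ← LinearMap.range_comp,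
    LinearMap.finrank_range_of_inj hinj, (degreeLTEquiv F k).finrank_eq, Module.finrank_fin_fun]

theorem hwt_weightedEval [DecidableEq F] (hv : ∀ i, v i ≠ 0) (f : F[X]) :
    hwt (weightedEval α v f) = n - #{i | f.eval (α i) = 0} := by
  simp [hwt_eq_sub_card_zeros, hv]

theorem sub_le_hwt_of_mem_tgrsSubmodule (hα : Function.Injective α) (hv : ∀ i, v i ≠ 0)
    (hk : 0 < k) {x : Fin n → F} (hx : x ∈ tgrsSubmodule α v k η) (hx0 : x ≠ 0) :
    n - k ≤ hwt x := by
  classical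
  obtain ⟨f, hdeg, -, rfl⟩ := (mem_tgrsSubmodule_iff hk).1 hx
  have hf : f ≠ 0 := by rintro rfl; exact hx0 (map_zero _)
  have := Lagrange.card_le_natDegree_of_eval_eq_zero (s := {i | f.eval (α i) = 0}) hα.injOn hf
    fun i hi => (mem_filter.1 hi).2
  rw [hwt_weightedEval hv]
  omega

theorem exists_sum_eq_of_hwt_eq_sub (hα : Function.Injective α) (hv : ∀ i, v i ≠ 0)
    (hk : 0 < k) (hkn : k ≤ n) {x : Fin n → F} (hx : x ∈ tgrsSubmodule α v k η) (hx0 : x ≠ 0)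
    (hwx : hwt x = n - k) : ∃ I : Finset (Fin n), #I = k ∧ η * ∑ i ∈ I, α i = -1 := by
  classical
  obtain ⟨f, hdeg, hcoeff, rfl⟩ := (mem_tgrsSubmodule_iff hk).1 hx
  have hf : f ≠ 0 := by rintro rfl; exact hx0 (map_zero _)
  rw [hwt_weightedEval hv] at hwx
  set Z : Finset (Fin n) := {i | f.eval (α i) = 0}
  have hZ : ∀ i ∈ Z, f.eval (α i) = 0 := fun i hi => (mem_filter.1 hi).2
  have hZk : #Z = k := by
    have := card_le_natDegree_of_eval_eq_zero hα.injOn hf hZ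
    have := card_le_univ Z
    rw [Fintype.card_fin] at this
    omega
  have hfZ := eq_C_mul_nodal hα.injOn (hZk ▸ hdeg) hZ
  rw [hZk] at hfZ
  have hlead : f.coeff k ≠ 0 := fun h => hf (by rw [hfZ, h, C_0, zero_mul])
  have hsub : f.coeff (k - 1) = f.coeff k * -∑ i ∈ Z, α i := by
    conv_lhs => rw [hfZ, coeff_C_mul, ← hZk, coeff_nodal_card_sub_one (card_pos.1 (hZk ▸ hk))]
    rw [hZk]
  refine ⟨Z, hZk, mul_left_cancel₀ hlead ?_⟩
  linear_combination hcoeff + η * hsub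

theorem exists_hwt_eq_sub_of_sum_eq (hα : Function.Injective α) (hv : ∀ i, v i ≠ 0) (hk : 0 < k)
    (hkn : k < n) {I : Finset (Fin n)} (hI : #I = k) (hS : η * ∑ i ∈ I, α i = -1) :
    ∃ x ∈ tgrsSubmodule α v k η, x ≠ 0 ∧ hwt x = n - k := by
  classical
  have hzeros : ({i | (nodal I α).eval (α i) = 0} : Finset (Fin n)) = I := by
    ext i
    simp only [mem_filter, mem_univ, true_and]
    refine ⟨fun h => ?_, fun hi => eval_nodal_at_node hi⟩
    by_contra hi
    exact eval_nodal_not_at_node (fun j hj hij => hi (by rwa [hα hij])) h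
  have hwx : hwt (weightedEval α v (nodal I α)) = n - k := by
    rw [hwt_weightedEval hv, hzeros, hI]
  have hcoeff : (nodal I α).coeff k = η * (nodal I α).coeff (k - 1) := by
    have hlead := (nodal_monic (s := I) (v := α)).coeff_natDegree
    rw [natDegree_nodal] at hlead
    rw [← hI, hlead, coeff_nodal_card_sub_one (card_pos.1 (hI ▸ hk))]
    linear_combination hS
  refine ⟨_, (mem_tgrsSubmodule_iff hk).2 ⟨nodal I α, by rw [natDegree_nodal, hI], hcoeff, rfl⟩,
    fun h => ?_, hwx⟩
  rw [h] at hwx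
  simp only [hwt, Pi.zero_apply, ne_eq, not_true_eq_false, Set.ofPred_false, Set.ncard_empty] at hwx
  omega

theorem isMinDist_of_forall_ne (hα : Function.Injective α) (hv : ∀ i, v i ≠ 0) (hk : 0 < k)
    (hkn : k < n) (h : ∀ I : Finset (Fin n), #I = k → η * ∑ i ∈ I, α i ≠ -1) :
    IsMinDist (tgrsSubmodule α v k η : Set (Fin n → F)) (n - k + 1) := by
  have hlower : ∀ x ∈ tgrsSubmodule α v k η, x ≠ 0 → n - k + 1 ≤ hwt x := fun x hx hx0 =>
    (sub_le_hwt_of_mem_tgrsSubmodule hα hv hk hx hx0).lt_of_ne fun heq => by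
      obtain ⟨I, hI, hS⟩ := exists_sum_eq_of_hwt_eq_sub hα hv hk hkn.le hx hx0 heq.symm
      exact h I hI hS
  have hfin := finrank_tgrsSubmodule (η := η) hα hv hk hkn
  obtain ⟨x, hx, hx0, hwx⟩ := exists_ne_zero_hwt_le (tgrsSubmodule α v k η) (by rw [hfin]; exact hk)
  rw [hfin] at hwx
  exact ⟨⟨x, hx, hx0, le_antisymm hwx (hlower x hx hx0)⟩, hlower⟩

theorem isMinDist_of_exists (hα : Function.Injective α) (hv : ∀ i, v i ≠ 0) (hk : 0 < k)
    (hkn : k < n) {I : Finset (Fin n)} (hI : #I = k) (hS : η * ∑ i ∈ I, α i = -1) :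
    IsMinDist (tgrsSubmodule α v k η : Set (Fin n → F)) (n - k) :=
  ⟨exists_hwt_eq_sub_of_sum_eq hα hv hk hkn hI hS,
    fun _ hx hx0 => sub_le_hwt_of_mem_tgrsSubmodule hα hv hk hx hx0⟩

theorem sum_mul_eq_zero_of_mem_tgrsSubmodule (hα : Function.Injective α) (hk : 0 < k)
    (hn : n = 2 * k) (hv : ∀ i, v i ^ 2 = nodalWeight univ α i) (hη : 2 + η * ∑ i, α i = 0)
    {x y : Fin n → F} (hx : x ∈ tgrsSubmodule α v k η) (hy : y ∈ tgrsSubmodule α v k η) :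
    ∑ i, x i * y i = 0 := by
  obtain ⟨f, hf, hfc, rfl⟩ := (mem_tgrsSubmodule_iff hk).1 hx
  obtain ⟨g, hg, hgc, rfl⟩ := (mem_tgrsSubmodule_iff hk).1 hy
  obtain ⟨k, rfl⟩ : ∃ j, k = j + 1 := ⟨k - 1, by omega⟩
  simp only [add_tsub_cancel_right] at hfc hgc
  have hcard : #(univ : Finset (Fin n)) = (k + 1) + (k + 1) := by simp [hn]; ring
  have hfg : (f * g).natDegree ≤ #(univ : Finset (Fin n)) := hcard ▸ natDegree_mul_le_of_le hf hg
  calc ∑ i, weightedEval α v f i * weightedEval α v g i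
      = ∑ i, (f * g).eval (α i) * nodalWeight univ α i := by
        refine sum_congr rfl fun i _ => ?_
        rw [weightedEval_apply, weightedEval_apply, eval_mul, ← hv]
        ring
    _ = (f * g).coeff (k + k + 1) + (f * g).coeff ((k + 1) + (k + 1)) * ∑ i, α i := by
        rw [sum_eval_mul_nodalWeight_of_natDegree_le hα.injOn ⟨⟨0, by omega⟩, mem_univ _⟩ hfg,
          hcard, show k + 1 + (k + 1) - 1 = k + k + 1 by omega]
    _ = η * f.coeff k * g.coeff k * (2 + η * ∑ i, α i) := by
        rw [coeff_mul_add_add_one hf hg, coeff_mul_add_eq_of_natDegree_le hf hg, hfc, hgc]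
        ring
    _ = 0 := by rw [hη, mul_zero]

theorem ne_zero_of_sq_eq_nodalWeight (hα : Function.Injective α)
    (hv : ∀ i, v i ^ 2 = nodalWeight univ α i) (i : Fin n) : v i ≠ 0 := fun h0 =>
  nodalWeight_ne_zero hα.injOn (mem_univ i) (by rw [← hv, h0, zero_pow two_ne_zero])

theorem isSelfDual_tgrsSubmodule (hα : Function.Injective α) (hk : 0 < k) (hn : n = 2 * k)
    (hv : ∀ i, v i ^ 2 = nodalWeight univ α i) (hη : 2 + η * ∑ i, α i = 0) :
    IsSelfDual (tgrsSubmodule α v k η : Set (Fin n → F)) := by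
  have hv0 := ne_zero_of_sq_eq_nodalWeight hα hv
  refine isSelfDual_of_two_mul_finrank_eq _ ?_ fun x hx y hy =>
    sum_mul_eq_zero_of_mem_tgrsSubmodule hα hk hn hv hη hx hy
  rw [finrank_tgrsSubmodule hα hv0 hk (by omega), hn]

end TGRSCode

-- The polynomial `m(x)` of the construction and the quartic of the gcd condition.
def mPoly (p : ℕ) (K : Type*) [Field K] : K[X] :=
  X ^ (2 * p) - X ^ (2 * p - 1) + 2 * X ^ (p + 1) + C ((3 : K)⁻¹) * X ^ 3 + 1

def gPoly (K : Type*) [Field K] : K[X] :=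
  X ^ 4 - C ((3 : K) - (3 : K)⁻¹) * X ^ 3 + 1

section PaperPolynomials

variable {K : Type*} [Field K] {p : ℕ}

theorem map_mPoly {L : Type*} [Field L] (φ : K →+* L) : (mPoly p K).map φ = mPoly p L := by
  simp [mPoly, map_ofNat φ 3]

theorem map_gPoly {L : Type*} [Field L] (φ : K →+* L) : (gPoly K).map φ = gPoly L := by
  simp [gPoly, map_ofNat φ 3]

theorem coeff_mPoly_two_mul_sub_one (hp : 3 ≤ p) : (mPoly p K).coeff (2 * p - 1) = -1 := by
  simp [mPoly, coeff_X_pow, coeff_one, show 2 * p - 1 ≠ 2 * p by omega,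
    show 2 * p - 1 ≠ p + 1 by omega, show 2 * p - 1 ≠ 3 by omega, show 2 * p - 1 ≠ 0 by omega]

theorem derivative_mPoly [CharP K p] (hp : 2 ≤ p) (h3 : (3 : K) ≠ 0) :
    derivative (mPoly p K) = (X ^ (p - 1) + X) ^ 2 := by
  have c1 : ((2 * p : ℕ) : K) = 0 := by rw [Nat.cast_mul, CharP.cast_eq_zero K p, mul_zero]
  have c2 : ((2 * p - 1 : ℕ) : K) = -1 := by
    rw [Nat.cast_sub (by omega), c1, Nat.cast_one, zero_sub]
  have c3 : ((p + 1 : ℕ) : K) = 1 := by rw [Nat.cast_succ, CharP.cast_eq_zero K p, zero_add]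
  have hsq : (X ^ (p - 1) + X : K[X]) ^ 2 = X ^ (2 * p - 1 - 1) + 2 * X ^ (p + 1 - 1) + X ^ 2 := by
    rw [show 2 * p - 1 - 1 = (p - 1) + (p - 1) by omega, show p + 1 - 1 = (p - 1) + 1 by omega]
    ring
  simp only [mPoly, derivative_add, derivative_sub, derivative_X_pow, derivative_mul,
    derivative_C, derivative_one, derivative_ofNat, c1, c2, c3]
  have hcubic : C (3 : K)⁻¹ * (C ((3 : ℕ) : K) * X ^ (3 - 1)) = X ^ 2 := by
    rw [← mul_assoc, ← C_mul, Nat.cast_ofNat, inv_mul_cancel₀ h3, C_1, one_mul]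
  rw [hsq, hcubic]
  simp

theorem eval_mPoly_of_pow_eq_neg (hp : 2 ≤ p) {β : K} (hβ : β ^ (p - 1) = -β) :
    (mPoly p K).eval β = (gPoly K).eval β := by
  have hpow : ∀ j, β ^ (p - 1 + j) = -β ^ (j + 1) := fun j => by rw [pow_add, hβ]; ring
  have e1 : β ^ (2 * p) = β ^ 4 := by
    rw [show 2 * p = p - 1 + (p - 1 + 2) by omega, hpow, pow_succ, hpow]; ring
  have e2 : β ^ (2 * p - 1) = β ^ 3 := by
    rw [show 2 * p - 1 = p - 1 + (p - 1 + 1) by omega, hpow, pow_succ, hpow]; ring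
  have e3 : β ^ (p + 1) = -β ^ 3 := by rw [show p + 1 = p - 1 + 2 by omega, hpow]
  simp only [mPoly, gPoly, eval_add, eval_sub, eval_mul, eval_pow, eval_X, eval_C, eval_one,
    eval_ofNat, e1, e2, e3]
  ring

variable [Fact p.Prime] [CharP K p]

theorem eval_derivative_mPoly_ne_zero (hp : 2 ≤ p) (h3 : (3 : K) ≠ 0)
    (hgcd : IsCoprime (derivative (mPoly p (ZMod p))) (gPoly (ZMod p))) {β : K}
    (hβ : (mPoly p K).eval β = 0) : (derivative (mPoly p K)).eval β ≠ 0 := by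
  have hco : IsCoprime (derivative (mPoly p K)) (gPoly K) := by
    simpa [← derivative_map, map_mPoly, map_gPoly] using
      hgcd.map (mapRingHom (ZMod.castHom dvd_rfl K))
  intro hβ'
  have hroot : β ^ (p - 1) = -β := by
    rw [derivative_mPoly hp h3] at hβ'
    simpa [eq_neg_iff_add_eq_zero] using hβ'
  have hg : (gPoly K).eval β = 0 := by rw [← eval_mPoly_of_pow_eq_neg hp hroot, hβ]
  simpa [hβ', hg] using hco.map (evalRingHom β)

end PaperPolynomials

section RootsOfMPoly

open Lagrange

variable {F : Type*} [Field F] {p : ℕ} {α : Fin (2 * p) → F}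

theorem injective_of_mPoly_eq_nodal [Fact p.Prime] [CharP F p] (hp : 2 ≤ p) (h3 : (3 : F) ≠ 0)
    (hgcd : IsCoprime (derivative (mPoly p (ZMod p))) (gPoly (ZMod p)))
    (hnodal : mPoly p F = nodal univ α) : Function.Injective α :=
  injective_of_eval_derivative_nodal_ne_zero fun i => by
    rw [← hnodal]
    exact eval_derivative_mPoly_ne_zero hp h3 hgcd (hnodal ▸ eval_nodal_at_node (mem_univ i))

theorem inv_sq_eq_nodalWeight_of_mPoly_eq_nodal [CharP F p] (hp : 2 ≤ p) (h3 : (3 : F) ≠ 0)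
    (hnodal : mPoly p F = nodal univ α) (i : Fin (2 * p)) :
    ((α i ^ (p - 1) + α i)⁻¹) ^ 2 = nodalWeight univ α i := by
  rw [nodalWeight_eq_eval_derivative_nodal (mem_univ i), ← hnodal, derivative_mPoly hp h3]
  simp [inv_pow]

theorem sum_eq_one_of_mPoly_eq_nodal (hp : 3 ≤ p) (hnodal : mPoly p F = nodal univ α) :
    ∑ i, α i = 1 := by
  have := coeff_nodal_card_sub_one (s := univ) (v := α) ⟨⟨0, by omega⟩, mem_univ _⟩
  rw [← hnodal, card_univ, Fintype.card_fin, coeff_mPoly_two_mul_sub_one hp] at this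
  linear_combination this

end RootsOfMPoly

theorem tgrs_selfdual_mds_or_nmds_Fq2p_general (p : ℕ) (hp : p.Prime) (hp3 : 3 < p)
    (F : Type*) [Field F] [CharP F p]
    (α : Fin (2 * p) → F)
    (hsplit : (X ^ (2 * p) - X ^ (2 * p - 1) + 2 * X ^ (p + 1)
        + Polynomial.C ((3 : F)⁻¹) * X ^ 3 + 1 : F[X]) =
      ∏ i, (X - Polynomial.C (α i)))
    (hgcd : IsCoprime
      (derivative (X ^ (2 * p) - X ^ (2 * p - 1) + 2 * X ^ (p + 1)
        + Polynomial.C ((3 : ZMod p)⁻¹) * X ^ 3 + 1 : (ZMod p)[X]))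
      (X ^ 4 - Polynomial.C ((3 : ZMod p) - (3 : ZMod p)⁻¹) * X ^ 3 + 1
        : (ZMod p)[X])) :
    ((∀ I : Finset (Fin (2 * p)), I.card = p → ∑ i ∈ I, α i ≠ 1 / 2) →
      IsSelfDual (TGRSCode F (2 * p) p α
          (fun i => (α i ^ (p - 1) + α i)⁻¹) (-2)) ∧
        IsMinDist (TGRSCode F (2 * p) p α
          (fun i => (α i ^ (p - 1) + α i)⁻¹) (-2)) (2 * p - p + 1)) ∧
    ((∃ I : Finset (Fin (2 * p)), I.card = p ∧ ∑ i ∈ I, α i = 1 / 2) →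
      IsSelfDual (TGRSCode F (2 * p) p α
          (fun i => (α i ^ (p - 1) + α i)⁻¹) (-2)) ∧
        IsMinDist (TGRSCode F (2 * p) p α
          (fun i => (α i ^ (p - 1) + α i)⁻¹) (-2)) (2 * p - p) ∧
        IsMinDist (dualCode (TGRSCode F (2 * p) p α
          (fun i => (α i ^ (p - 1) + α i)⁻¹) (-2))) p) := by
  have : Fact p.Prime := ⟨hp⟩
  have h2 : (2 : F) ≠ 0 := by
    exact_mod_cast CharP.cast_ne_zero_of_ne_of_prime F Nat.prime_two (by omega)
  have h3 : (3 : F) ≠ 0 := by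
    exact_mod_cast CharP.cast_ne_zero_of_ne_of_prime F Nat.prime_three (by omega)
  have hnodal : mPoly p F = Lagrange.nodal univ α := hsplit
  have hα := injective_of_mPoly_eq_nodal (by omega) h3 hgcd hnodal
  have hv := inv_sq_eq_nodalWeight_of_mPoly_eq_nodal (by omega) h3 hnodal
  have hv0 := TGRSCode.ne_zero_of_sq_eq_nodalWeight hα hv
  have hcond : ∀ I : Finset (Fin (2 * p)), (-2 : F) * ∑ i ∈ I, α i = -1 ↔ ∑ i ∈ I, α i = 1 / 2 :=
    fun I => by rw [eq_div_iff h2]; constructor <;> intro h <;> linear_combination -h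
  rw [← TGRSCode.coe_tgrsSubmodule hp.pos]
  have hself := TGRSCode.isSelfDual_tgrsSubmodule (η := -2) hα hp.pos rfl hv
    (by rw [sum_eq_one_of_mPoly_eq_nodal (by omega) hnodal]; ring)
  refine ⟨fun h => ⟨hself, ?_⟩, fun ⟨I, hI, hS⟩ => ⟨hself, ?_⟩⟩
  · exact TGRSCode.isMinDist_of_forall_ne hα hv0 hp.pos (by omega)
      fun I hI => (hcond I).not.2 (h I hI)
  · have hnmds := TGRSCode.isMinDist_of_exists hα hv0 hp.pos (by omega) hI ((hcond I).2 hS)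
    rw [show 2 * p - p = p by omega] at hnmds ⊢
    exact ⟨hnmds, hself ▸ hnmds⟩

/-- in the setting of the construction from
`m(x) = x^{2p} - x^{2p-1} + 2x^{p+1} + 3⁻¹ x³ + 1`, with `v_i = (α_i^{p-1} + α_i)⁻¹`
and `η = -2`: if `Σ_{i∈I} α_i ≠ 1/2` for every `I` of size `p` then `C_p(α,v,η)` is a
self-dual MDS code; otherwise it is a self-dual NMDS code. -/
theorem tgrs_selfdual_mds_or_nmds_Fq2p (p : ℕ) (hp : p.Prime) (hp3 : 3 < p)
    (F : Type*) [Field F] [Fintype F] [CharP F p]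
    (α : Fin (2 * p) → F)
    (hsplit : (X ^ (2 * p) - X ^ (2 * p - 1) + 2 * X ^ (p + 1)
        + Polynomial.C ((3 : F)⁻¹) * X ^ 3 + 1 : F[X]) =
      ∏ i, (X - Polynomial.C (α i)))
    (hgcd : IsCoprime
      (derivative (X ^ (2 * p) - X ^ (2 * p - 1) + 2 * X ^ (p + 1)
        + Polynomial.C ((3 : ZMod p)⁻¹) * X ^ 3 + 1 : (ZMod p)[X]))
      (X ^ 4 - Polynomial.C ((3 : ZMod p) - (3 : ZMod p)⁻¹) * X ^ 3 + 1
        : (ZMod p)[X])) :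
    ((∀ I : Finset (Fin (2 * p)), I.card = p → ∑ i ∈ I, α i ≠ 1 / 2) →
      IsSelfDual (TGRSCode F (2 * p) p α
          (fun i => (α i ^ (p - 1) + α i)⁻¹) (-2)) ∧
        IsMinDist (TGRSCode F (2 * p) p α
          (fun i => (α i ^ (p - 1) + α i)⁻¹) (-2)) (2 * p - p + 1)) ∧
    ((∃ I : Finset (Fin (2 * p)), I.card = p ∧ ∑ i ∈ I, α i = 1 / 2) →
      IsSelfDual (TGRSCode F (2 * p) p α
          (fun i => (α i ^ (p - 1) + α i)⁻¹) (-2)) ∧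
        IsMinDist (TGRSCode F (2 * p) p α
          (fun i => (α i ^ (p - 1) + α i)⁻¹) (-2)) (2 * p - p) ∧
        IsMinDist (dualCode (TGRSCode F (2 * p) p α
          (fun i => (α i ^ (p - 1) + α i)⁻¹) (-2))) p) :=
  tgrs_selfdual_mds_or_nmds_Fq2p_general p hp hp3 F α hsplit hgcd
end
end

section
/- In the setting where q is an odd prime power, n ≥ 6 an even integer with gcd(q,n) = 1, b ∈ F_q\{0}, m(x) = x^n + b x^{n−1} + 1 splits completely over F_q with roots α_1,…,α_n each satisfying α_i ≠ b(1−n)n^{−1} and α_i^n ≠ n−1, v_i ∈ F_{q²} satisfies v_i² = α_i/(α_i^n − n + 1), and η := 2b^{−1}: if Σ_{i∈I} α_i ≠ −b/2 for every subset I ⊆ {1,…,n} with |I| = n/2, then C_{n/2}(α,v,η) is a self-dual MDS code of length n over F_{q²}; otherwise C_{n/2}(α,v,η) is a self-dual NMDS code of length n over F_{q²}. -/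
open Finset Polynomial

noncomputable section

/-!
Write `m = X^n + b X^{n-1} + 1 = ∏ (X - αᵢ)`. Since `m(αᵢ) = 0`, one has
`αᵢ m'(αᵢ) = αᵢⁿ - n + 1`, so the hypothesis says `vᵢ² = 1 / m'(αᵢ)`. Euler's identity
`∑ P(αᵢ) / m'(αᵢ) = P_{n-1} - b P_n` (for `deg P ≤ n`) turns the inner product of the codewords
of two twisted polynomials with `X^{k-1}`-coefficients `a, a'` (`k = n/2`) into
`η a a' (2 - η b)`, which vanishes for `η = 2/b`; as the code has dimension `k`, it is self-dual.

A nonzero twisted polynomial vanishes at no more than `k` nodes. If it vanishes at exactly `k` of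
them it is a multiple of their nodal polynomial, and comparing the coefficients of `X^k` and
`X^{k-1}` shows that these nodes sum to `-1/η = -b/2`. So the minimum distance is `n - k + 1`
unless such a `k`-set exists; if it does, its nodal polynomial is twisted and gives a codeword
of weight `n - k`.
-/

namespace Polynomial

theorem coeff_mul_add_add_one_of_natDegree_le {R : Type*} [Semiring R] {p q : R[X]} {m l : ℕ}
    (hp : p.natDegree ≤ m + 1) (hq : q.natDegree ≤ l + 1) :
    (p * q).coeff (m + l + 1) = p.coeff m * q.coeff (l + 1) + p.coeff (m + 1) * q.coeff l := by
  rw [coeff_mul, Finset.sum_eq_add_of_mem (m, l + 1) (m + 1, l) (by simp; omega)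
    (by simp; omega) (by simp)]
  rintro ⟨i, j⟩ hij hne
  rw [HasAntidiagonal.mem_antidiagonal] at hij
  obtain hi | hi := lt_or_ge (m + 1) i
  · rw [coeff_eq_zero_of_natDegree_lt (hp.trans_lt hi), zero_mul]
  obtain hj | hj := lt_or_ge (l + 1) j
  · rw [coeff_eq_zero_of_natDegree_lt (hq.trans_lt hj), mul_zero]
  simp only [ne_eq, Prod.ext_iff] at hne
  omega

end Polynomial

namespace Lagrange

section Nodal

variable {R : Type*} [CommRing R] {ι : Type*} {s : Finset ι} {v : ι → R}

theorem coeff_nodal_card [Nontrivial R] : (nodal s v).coeff #s = 1 := by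
  simpa only [natDegree_nodal] using (nodal_monic (s := s) (v := v)).coeff_natDegree

theorem nextCoeff_nodal : (nodal s v).nextCoeff = -∑ i ∈ s, v i :=
  prod_X_sub_C_nextCoeff v

end Nodal

variable {F : Type*} [Field F] {ι : Type*} [DecidableEq ι] {s : Finset ι} {v : ι → F}

/-- Euler's identity: `nodalWeight s v i = 1 / m'(v i)` for the nodal polynomial `m`, and the
right-hand side is the coefficient of `X^{#s-1}` in `P mod m`. -/
theorem sum_nodalWeight_mul_eval (hvs : Set.InjOn v s) {P : F[X]} (hP : P.natDegree ≤ #s) :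
    ∑ i ∈ s, nodalWeight s v i * P.eval (v i) =
      P.coeff (#s - 1) - P.coeff #s * (nodal s v).coeff (#s - 1) := by
  set R := P - C (P.coeff #s) * nodal s v
  have hR : R.degree < #s := by
    refine (degree_lt_iff_coeff_zero _ _).mpr fun m hm => ?_
    obtain rfl | hm := eq_or_lt_of_le (hm : #s ≤ m)
    · simp only [R, coeff_sub, coeff_C_mul, coeff_nodal_card, mul_one, sub_self]
    · have hRdeg : R.natDegree ≤ #s := (natDegree_sub_le _ _).trans
        (max_le hP ((natDegree_C_mul_le _ _).trans natDegree_nodal.le))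
      exact coeff_eq_zero_of_natDegree_lt (hRdeg.trans_lt hm)
  rw [show P.coeff (#s - 1) - P.coeff #s * (nodal s v).coeff (#s - 1) = R.coeff (#s - 1) by
    simp [R, coeff_C_mul], coeff_eq_sum hvs hR]
  refine Finset.sum_congr rfl fun i hi => ?_
  simp [R, eval_nodal_at_node hi, nodalWeight, Finset.prod_inv_distrib, div_eq_inv_mul]

end Lagrange

section Duality

variable {F : Type*} [Field F] {n : ℕ}

theorem dualCode_eq_dualCoannihilator (C : Submodule F (Fin n → F)) :
    dualCode (C : Set (Fin n → F)) =
      (C.map (dotProductEquiv F (Fin n)).toLinearMap).dualCoannihilator := by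
  ext x
  simp only [dualCode, Set.mem_ofPred_eq, SetLike.mem_coe, Submodule.mem_dualCoannihilator,
    Submodule.mem_map, forall_exists_index, and_imp, forall_apply_eq_imp_iff₂]
  simp [dotProduct, mul_comm]

theorem isSelfDual_of_subset_dualCode {C : Submodule F (Fin n → F)}
    (hC : (C : Set (Fin n → F)) ⊆ dualCode C)
    (hdim : Module.finrank F C + Module.finrank F C = n) :
    IsSelfDual (C : Set (Fin n → F)) := by
  rw [dualCode_eq_dualCoannihilator] at hC
  rw [IsSelfDual, dualCode_eq_dualCoannihilator]
  have hcodim := Subspace.finrank_add_finrank_dualCoannihilator_eq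
    (C.map (dotProductEquiv F (Fin n)).toLinearMap)
  rw [LinearEquiv.finrank_map_eq, Module.finrank_fin_fun] at hcodim
  exact congrArg _ (Submodule.eq_of_le_of_finrank_eq hC (by omega))

end Duality

section Twisted

variable {F : Type*} [Field F] {k : ℕ} {η : F}

/-- Sends `∑_{j<k} a_j X^j` to the polynomial `∑_{j<k} a_j X^j + η a_{k-1} X^k` of the paper. -/
def twist (k : ℕ) (η : F) : F[X] →ₗ[F] F[X] :=
  LinearMap.id + (lcoeff F (k - 1)).smulRight (C η * X ^ k)

theorem twist_apply (P : F[X]) : twist k η P = P + C (η * P.coeff (k - 1)) * X ^ k := by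
  simp only [twist, LinearMap.add_apply, LinearMap.id_apply, LinearMap.smulRight_apply,
    lcoeff_apply, smul_eq_C_mul, C_mul]
  ring

theorem coeff_twist (P : F[X]) (m : ℕ) :
    (twist k η P).coeff m = P.coeff m + if m = k then η * P.coeff (k - 1) else 0 := by
  rw [twist_apply, coeff_add, coeff_C_mul_X_pow]

theorem eval_twist (P : F[X]) (x : F) :
    (twist k η P).eval x = P.eval x + η * P.coeff (k - 1) * x ^ k := by
  simp [twist_apply]

theorem twist_injective (hk : 0 < k) : Function.Injective (twist k η) := by
  refine (injective_iff_map_eq_zero _).mpr fun P hP => ?_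
  have hlow : P.coeff (k - 1) = 0 := by
    simpa [coeff_twist, show k - 1 ≠ k by omega] using congrArg (coeff · (k - 1)) hP
  simpa [twist, hlow] using hP

def twistedPolys (k : ℕ) (η : F) : Submodule F F[X] := (degreeLT F k).map (twist k η)

theorem mem_twistedPolys_iff (hk : 0 < k) {Q : F[X]} :
    Q ∈ twistedPolys k η ↔ Q.natDegree ≤ k ∧ Q.coeff k = η * Q.coeff (k - 1) := by
  have hk1 : k - 1 ≠ k := by omega
  constructor
  · rintro ⟨P, hP, rfl⟩
    have hPk : ∀ m, k ≤ m → P.coeff m = 0 := (degree_lt_iff_coeff_zero _ _).mp (mem_degreeLT.mp hP)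
    refine ⟨natDegree_le_iff_coeff_eq_zero.mpr fun m hm => ?_, ?_⟩
    · simp [coeff_twist, hPk m (by exact_mod_cast hm.le), (by exact_mod_cast hm.ne' : m ≠ k)]
    · simp [coeff_twist, hPk k le_rfl, hk1]
  · rintro ⟨hQdeg, hQk⟩
    refine ⟨Q - C (Q.coeff k) * X ^ k, mem_degreeLT.mpr ((degree_lt_iff_coeff_zero _ _).mpr
      fun m hm => ?_), ?_⟩
    · obtain rfl | hm := eq_or_lt_of_le hm
      · simp
      · simp [hm.ne', coeff_eq_zero_of_natDegree_lt (hQdeg.trans_lt hm)]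
    · ext m
      by_cases hm : m = k
      · subst hm
        rw [coeff_twist, coeff_sub, coeff_sub, coeff_C_mul_X_pow, coeff_C_mul_X_pow, if_pos rfl,
          if_pos rfl, if_neg hk1, hQk]
        ring
      · simp only [coeff_twist, coeff_sub, coeff_C_mul_X_pow, if_neg hm]
        ring

theorem finrank_twistedPolys (hk : 0 < k) : Module.finrank F (twistedPolys k η) = k := by
  rw [twistedPolys, ← (Submodule.equivMapOfInjective _ (twist_injective hk) _).finrank_eq,
    (degreeLTEquiv F k).finrank_eq, Module.finrank_fin_fun]

theorem monic_mem_twistedPolys (hk : 0 < k) {Q : F[X]} (hQ : Q.Monic) (hdeg : Q.natDegree = k)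
    (hnext : η * Q.nextCoeff = 1) : Q ∈ twistedPolys k η := by
  rw [mem_twistedPolys_iff hk, ← hdeg, hQ.coeff_natDegree, ← hnext,
    nextCoeff_of_natDegree_pos (hdeg ▸ hk)]
  exact ⟨le_rfl, rfl⟩

end Twisted

section EvalCode

variable {F : Type*} [Field F] {n k : ℕ} {η : F} {A v : Fin n → F}

def evalCode (A v : Fin n → F) : F[X] →ₗ[F] Fin n → F :=
  LinearMap.pi fun i => v i • leval (A i)

@[simp]
theorem evalCode_apply (P : F[X]) (i : Fin n) : evalCode A v P i = v i * P.eval (A i) := rfl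

theorem coe_map_evalCode_twistedPolys (hk : 0 < k) :
    ((twistedPolys k η).map (evalCode A v) : Set (Fin n → F)) = TGRSCode F n k A v η := by
  ext c
  simp only [SetLike.mem_coe, Submodule.mem_map, mem_twistedPolys_iff hk, TGRSCode,
    Set.mem_ofPred_eq]
  constructor
  · rintro ⟨Q, ⟨hQdeg, hQk⟩, rfl⟩
    refine ⟨Q.coeff, funext fun i => ?_⟩
    rw [evalCode_apply, eval_eq_sum_range' (Nat.lt_succ_of_le hQdeg), Finset.sum_range_succ, hQk]
  · rintro ⟨a, rfl⟩
    set P : F[X] := ∑ j ∈ Finset.range k, C (a j) * X ^ j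
    have hP : P ∈ degreeLT F k := Submodule.sum_mem _ fun j hj =>
      mem_degreeLT.mpr ((degree_C_mul_X_pow_le _ _).trans_lt
        (by exact_mod_cast Finset.mem_range.mp hj))
    have hPk : P.coeff (k - 1) = a (k - 1) := by
      simp [P, hk]
    refine ⟨twist k η P, (mem_twistedPolys_iff hk).mp ⟨P, hP, rfl⟩, funext fun i => ?_⟩
    rw [evalCode_apply, eval_twist, hPk]
    simp [P, eval_finsetSum]

theorem evalCode_eq_zero_iff (hA : Function.Injective A) (hv : ∀ i, v i ≠ 0) {P : F[X]}
    (hP : P.natDegree < n) :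
    evalCode A v P = 0 ↔ P = 0 := by
  refine ⟨fun h => eq_zero_of_natDegree_lt_card_of_eval_eq_zero P hA (fun i => ?_)
    (by simpa using hP), fun h => by simp [h]⟩
  simpa [hv i] using congrFun h i

theorem finrank_map_evalCode (hA : Function.Injective A) (hv : ∀ i, v i ≠ 0)
    {p : Submodule F F[X]} (hp : ∀ P ∈ p, P.natDegree < n) :
    Module.finrank F (p.map (evalCode A v)) = Module.finrank F p := by
  have hinj : Function.Injective ((evalCode A v).comp p.subtype) :=
    (injective_iff_map_eq_zero _).mpr fun P hP =>
      Subtype.ext ((evalCode_eq_zero_iff hA hv (hp P P.2)).mp hP)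
  have := LinearMap.finrank_range_of_inj hinj
  rwa [LinearMap.range_comp, Submodule.range_subtype] at this

end EvalCode

section Weights

variable {F : Type*} [Field F] {n k : ℕ} {η : F} {A v : Fin n → F}

open Classical in
def zeroNodes (A : Fin n → F) (Q : F[X]) : Finset (Fin n) :=
  Finset.univ.filter fun i => Q.IsRoot (A i)

@[simp]
theorem mem_zeroNodes {Q : F[X]} {i : Fin n} : i ∈ zeroNodes A Q ↔ Q.IsRoot (A i) := by
  simp [zeroNodes]

theorem hwt_evalCode (hv : ∀ i, v i ≠ 0) (Q : F[X]) :
    hwt (evalCode A v Q) = n - #(zeroNodes A Q) := by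
  classical
  have hsupp : {i | evalCode A v Q i ≠ 0} = ↑(Finset.univ.filter fun i => ¬ Q.IsRoot (A i)) := by
    ext i
    simp [hv i]
  have hsplit := Finset.card_filter_add_card_filter_not (s := Finset.univ)
    (fun i => Q.IsRoot (A i))
  rw [Finset.card_univ, Fintype.card_fin] at hsplit
  rw [hwt, hsupp, Set.ncard_coe_finset, zeroNodes]
  omega

theorem card_zeroNodes_le (hA : Function.Injective A) {Q : F[X]} (hQ : Q ≠ 0) :
    #(zeroNodes A Q) ≤ Q.natDegree := by
  classical
  rw [← Finset.card_image_of_injective _ hA]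
  refine card_le_degree_of_subset_roots fun x hx => ?_
  obtain ⟨i, hi, rfl⟩ := Finset.mem_image.mp (Finset.mem_val.mp hx)
  exact (mem_roots hQ).mpr (mem_zeroNodes.mp hi)

theorem eq_C_mul_nodal_zeroNodes (hA : Function.Injective A) {Q : F[X]} {d : ℕ}
    (hQ : Q.natDegree ≤ d) (hcard : #(zeroNodes A Q) = d) :
    Q = C (Q.coeff d) * Lagrange.nodal (zeroNodes A Q) A := by
  rw [← sub_eq_zero]
  refine Polynomial.eq_zero_of_degree_lt_of_eval_index_eq_zero (zeroNodes A Q) hA.injOn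
    ((degree_lt_iff_coeff_zero _ _).mpr fun m hm => ?_) fun i hi => ?_
  · rw [hcard] at hm
    obtain rfl | hm := eq_or_lt_of_le hm
    · simp [coeff_C_mul, ← hcard, Lagrange.coeff_nodal_card]
    · have hnodal : (Lagrange.nodal (zeroNodes A Q) A).coeff m = 0 :=
        coeff_eq_zero_of_natDegree_lt (by rwa [Lagrange.natDegree_nodal, hcard])
      simp [coeff_eq_zero_of_natDegree_lt (hQ.trans_lt hm), hnodal]
  · simp [Lagrange.eval_nodal_at_node hi, (mem_zeroNodes.mp hi).eq_zero]

/-- Such a `Q` is `c ∏_{i ∈ Z} (X - A i)`; comparing the coefficients of `X^k` and `X^{k-1}`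
gives `1 = -η ∑_{i ∈ Z} A i`. -/
theorem sum_zeroNodes_of_card_eq (hA : Function.Injective A) (hk : 0 < k) {Q : F[X]}
    (hQ : Q ∈ twistedPolys k η) (hQ0 : Q ≠ 0) (hcard : #(zeroNodes A Q) = k) :
    ∑ i ∈ zeroNodes A Q, A i = -η⁻¹ := by
  obtain ⟨hdeg, hrel⟩ := (mem_twistedPolys_iff hk).mp hQ
  set Z := zeroNodes A Q
  set c := Q.coeff k
  have hfac : Q = C c * Lagrange.nodal Z A := eq_C_mul_nodal_zeroNodes hA hdeg hcard
  have hc : c ≠ 0 := fun h => hQ0 (by rw [hfac, h, C_0, zero_mul])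
  have hsub : Q.coeff (k - 1) = c * -∑ i ∈ Z, A i := by
    rw [hfac, coeff_C_mul, ← Lagrange.nextCoeff_nodal, nextCoeff_of_natDegree_pos
      (by rwa [Lagrange.natDegree_nodal, hcard]), Lagrange.natDegree_nodal, hcard]
  have hsum : η * ∑ i ∈ Z, A i = -1 :=
    mul_left_cancel₀ hc (by linear_combination hrel + η * hsub)
  have hη : η ≠ 0 := by rintro rfl; simp at hsum
  field_simp
  linear_combination hsum

end Weights

section MinDist

variable {F : Type*} [Field F] {n k : ℕ} {η : F} {A v : Fin n → F}

theorem exists_twistedPolys_of_mem_tgrs (hA : Function.Injective A) (hk : 0 < k)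
    {c : Fin n → F} (hc : c ∈ TGRSCode F n k A v η) (hc0 : c ≠ 0) :
    ∃ Q ∈ twistedPolys k η, Q ≠ 0 ∧ #(zeroNodes A Q) ≤ k ∧ c = evalCode A v Q := by
  rw [← coe_map_evalCode_twistedPolys hk] at hc
  obtain ⟨Q, hQ, rfl⟩ := hc
  have hQ0 : Q ≠ 0 := by rintro rfl; exact hc0 (map_zero _)
  exact ⟨Q, hQ, hQ0, (card_zeroNodes_le hA hQ0).trans ((mem_twistedPolys_iff hk).mp hQ).1, rfl⟩

theorem evalCode_mem_tgrs_ne_zero (hA : Function.Injective A) (hv : ∀ i, v i ≠ 0)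
    (hk : 0 < k) (hkn : k < n) {Q : F[X]} (hQ : Q ∈ twistedPolys k η) (hQ0 : Q ≠ 0) :
    evalCode A v Q ∈ TGRSCode F n k A v η ∧ evalCode A v Q ≠ 0 := by
  refine ⟨?_, fun h => hQ0 ?_⟩
  · rw [← coe_map_evalCode_twistedPolys hk]
    exact Submodule.mem_map_of_mem hQ
  · exact (evalCode_eq_zero_iff hA hv
    (((mem_twistedPolys_iff hk).mp hQ).1.trans_lt hkn)).mp h

theorem sub_le_hwt_of_mem_tgrs (hA : Function.Injective A) (hv : ∀ i, v i ≠ 0) (hk : 0 < k)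
    {c : Fin n → F} (hc : c ∈ TGRSCode F n k A v η) (hc0 : c ≠ 0) :
    n - k ≤ hwt c := by
  obtain ⟨Q, -, -, hcard, rfl⟩ := exists_twistedPolys_of_mem_tgrs hA hk hc hc0
  rw [hwt_evalCode hv]
  omega

theorem exists_sum_eq_of_hwt_eq (hA : Function.Injective A) (hv : ∀ i, v i ≠ 0)
    (hk : 0 < k) (hkn : k < n) {c : Fin n → F} (hc : c ∈ TGRSCode F n k A v η) (hc0 : c ≠ 0)
    (hwtc : hwt c = n - k) : ∃ S : Finset (Fin n), #S = k ∧ ∑ i ∈ S, A i = -η⁻¹ := by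
  obtain ⟨Q, hQ, hQ0, hcard, rfl⟩ := exists_twistedPolys_of_mem_tgrs hA hk hc hc0
  have hk' : #(zeroNodes A Q) = k := by
    have := Finset.card_le_univ (zeroNodes A Q)
    rw [hwt_evalCode hv] at hwtc
    simp only [Fintype.card_fin] at this
    omega
  exact ⟨_, hk', sum_zeroNodes_of_card_eq hA hk hQ hQ0 hk'⟩

/-- The codeword of weight `n - k + 1` comes from the monic polynomial
`(X + t) ∏_{i ∈ J} (X - A i)`, `#J = k - 1`, with `t` chosen so that its coefficient of `X^{k-1}`
is `η⁻¹`. -/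
theorem isMinDist_tgrs_of_forall_sum_ne (hA : Function.Injective A) (hv : ∀ i, v i ≠ 0)
    (hk : 0 < k) (hkn : k < n) (hη : η ≠ 0)
    (hsum : ∀ S : Finset (Fin n), #S = k → ∑ i ∈ S, A i ≠ -η⁻¹) :
    IsMinDist (TGRSCode F n k A v η) (n - k + 1) := by
  refine ⟨?_, fun c hc hc0 => ?_⟩
  · obtain ⟨J, -, hJ⟩ := Finset.exists_subset_card_eq (s := (Finset.univ : Finset (Fin n)))
      (n := k - 1) (by simp; omega)
    set Q := Lagrange.nodal J A * (X + C (η⁻¹ - (Lagrange.nodal J A).nextCoeff))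
    have hmonic : Q.Monic := Lagrange.nodal_monic.mul (monic_X_add_C _)
    have hdeg : Q.natDegree = k := by
      rw [Lagrange.nodal_monic.natDegree_mul (monic_X_add_C _), Lagrange.natDegree_nodal,
        natDegree_X_add_C, hJ]
      omega
    have hQ : Q ∈ twistedPolys k η := monic_mem_twistedPolys hk hmonic hdeg (by
      rw [Lagrange.nodal_monic.nextCoeff_mul (monic_X_add_C _), nextCoeff_X_add_C,
        add_sub_cancel, mul_inv_cancel₀ hη])
    have hJZ : J ⊆ zeroNodes A Q := fun i hi => mem_zeroNodes.mpr (by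
      simp [Q, Lagrange.eval_nodal_at_node hi])
    have hZk : #(zeroNodes A Q) ≤ k := hdeg ▸ card_zeroNodes_le hA hmonic.ne_zero
    have hZne : #(zeroNodes A Q) ≠ k := fun h =>
      hsum _ h (sum_zeroNodes_of_card_eq hA hk hQ hmonic.ne_zero h)
    obtain ⟨hmem, hne⟩ := evalCode_mem_tgrs_ne_zero hA hv hk hkn hQ hmonic.ne_zero
    refine ⟨_, hmem, hne, ?_⟩
    have := Finset.card_le_card hJZ
    rw [hwt_evalCode hv]
    omega
  · have hge := sub_le_hwt_of_mem_tgrs hA hv hk hc hc0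
    have hne : hwt c ≠ n - k := fun h => by
      obtain ⟨S, hS, hSsum⟩ := exists_sum_eq_of_hwt_eq hA hv hk hkn hc hc0 h
      exact hsum S hS hSsum
    omega

/-- The nodal polynomial of the `k` given nodes is twisted and vanishes at exactly those nodes. -/
theorem isMinDist_tgrs_of_exists_sum_eq (hA : Function.Injective A) (hv : ∀ i, v i ≠ 0)
    (hk : 0 < k) (hkn : k < n) (hη : η ≠ 0)
    (hsum : ∃ S : Finset (Fin n), #S = k ∧ ∑ i ∈ S, A i = -η⁻¹) :
    IsMinDist (TGRSCode F n k A v η) (n - k) := by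
  refine ⟨?_, fun c hc hc0 => sub_le_hwt_of_mem_tgrs hA hv hk hc hc0⟩
  obtain ⟨S, hS, hSsum⟩ := hsum
  set Q := Lagrange.nodal S A
  have hQ0 : Q ≠ 0 := Lagrange.nodal_ne_zero
  have hQ : Q ∈ twistedPolys k η := monic_mem_twistedPolys hk Lagrange.nodal_monic
    (by rw [Lagrange.natDegree_nodal, hS])
    (by rw [Lagrange.nextCoeff_nodal, hSsum, neg_neg, mul_inv_cancel₀ hη])
  have hSZ : S ⊆ zeroNodes A Q := fun i hi => mem_zeroNodes.mpr (Lagrange.eval_nodal_at_node hi)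
  have hZk : #(zeroNodes A Q) ≤ k := (card_zeroNodes_le hA hQ0).trans (by
    rw [Lagrange.natDegree_nodal, hS])
  obtain ⟨hmem, hne⟩ := evalCode_mem_tgrs_ne_zero hA hv hk hkn hQ hQ0
  refine ⟨_, hmem, hne, ?_⟩
  have := Finset.card_le_card hSZ
  rw [hwt_evalCode hv]
  omega

end MinDist

section SelfDual

variable {F : Type*} [Field F] {n k : ℕ} {η : F} {A v : Fin n → F}

/-- For twisted `Q, R` of degree `≤ k`, the coefficients of `X^{2k-1}` and `X^{2k}` in `QR` are
`2η a b` and `η² a b` (`a, b` the coefficients of `X^{k-1}`), so Euler's identity gives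
`η a b (2 - η mₙ₋₁)`. -/
theorem sum_nodalWeight_mul_eval_mul_eval_eq_zero (hn : n = k + k) (hk : 0 < k)
    (hA : Function.Injective A)
    (hη : η * (Lagrange.nodal Finset.univ A).coeff (n - 1) = 2) {Q R : F[X]}
    (hQ : Q ∈ twistedPolys k η) (hR : R ∈ twistedPolys k η) :
    ∑ i, Lagrange.nodalWeight Finset.univ A i * (Q.eval (A i) * R.eval (A i)) = 0 := by
  obtain ⟨j, rfl⟩ : ∃ j, k = j + 1 := ⟨k - 1, by omega⟩
  obtain ⟨hQdeg, hQk⟩ := (mem_twistedPolys_iff hk).mp hQ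
  obtain ⟨hRdeg, hRk⟩ := (mem_twistedPolys_iff hk).mp hR
  simp only [add_tsub_cancel_right] at hQk hRk
  have hQR : (Q * R).natDegree ≤ #(Finset.univ : Finset (Fin n)) := by
    simpa [hn] using natDegree_mul_le_of_le hQdeg hRdeg
  have euler := Lagrange.sum_nodalWeight_mul_eval hA.injOn hQR
  simp only [eval_mul, Finset.card_univ, Fintype.card_fin] at euler
  rw [euler]
  generalize (Lagrange.nodal Finset.univ A).coeff (n - 1) = M at hη ⊢
  subst hn
  rw [show j + 1 + (j + 1) - 1 = j + j + 1 by omega,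
    coeff_mul_add_add_one_of_natDegree_le hQdeg hRdeg,
    coeff_mul_add_eq_of_natDegree_le hQdeg hRdeg]
  linear_combination (Q.coeff j - Q.coeff (j + 1) * M) * hRk +
    R.coeff j * (1 - η * M) * hQk - η * Q.coeff j * R.coeff j * hη

theorem ne_zero_of_sq_eq_nodalWeight (hA : Function.Injective A)
    (hv : ∀ i, v i ^ 2 = Lagrange.nodalWeight Finset.univ A i) (i : Fin n) : v i ≠ 0 :=
  fun h => Lagrange.nodalWeight_ne_zero hA.injOn (Finset.mem_univ i)
    (by rw [← hv, h, zero_pow two_ne_zero])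

theorem isSelfDual_tgrs (hn : n = k + k) (hk : 0 < k) (hA : Function.Injective A)
    (hv : ∀ i, v i ^ 2 = Lagrange.nodalWeight Finset.univ A i)
    (hη : η * (Lagrange.nodal Finset.univ A).coeff (n - 1) = 2) :
    IsSelfDual (TGRSCode F n k A v η) := by
  rw [← coe_map_evalCode_twistedPolys hk]
  refine isSelfDual_of_subset_dualCode ?_ ?_
  · rintro _ ⟨Q, hQ, rfl⟩ _ ⟨R, hR, rfl⟩
    simpa [mul_mul_mul_comm, ← sq, hv] using
      sum_nodalWeight_mul_eval_mul_eval_eq_zero hn hk hA hη hQ hR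
  · rw [finrank_map_evalCode hA (ne_zero_of_sq_eq_nodalWeight hA hv) fun P hP =>
      ((mem_twistedPolys_iff hk).mp hP).1.trans_lt (by omega), finrank_twistedPolys hk, hn]

end SelfDual

section Trinomial

variable {K : Type*} [Field K] {n : ℕ} {B : K} {A : Fin n → K}

def tgrsTrinomial (n : ℕ) (B : K) : K[X] := X ^ n + C B * X ^ (n - 1) + 1

theorem eval_derivative_tgrsTrinomial (hn : 2 ≤ n) (x : K) :
    (derivative (tgrsTrinomial n B)).eval x = x ^ (n - 2) * (n * x + (n - 1) * B) := by
  obtain ⟨j, rfl⟩ : ∃ j, n = j + 2 := ⟨n - 2, by omega⟩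
  simp only [tgrsTrinomial, derivative_add, derivative_X_pow, derivative_C_mul_X_pow,
    derivative_one, eval_add, eval_mul, eval_pow, eval_X, eval_C, eval_zero,
    show j + 2 - 1 = j + 1 by omega, add_tsub_cancel_right]
  push_cast
  ring

theorem nodal_univ_eq_tgrsTrinomial (hsplit : tgrsTrinomial n B = ∏ i, (X - C (A i))) :
    Lagrange.nodal Finset.univ A = tgrsTrinomial n B := by
  rw [Lagrange.nodal_eq, hsplit]

theorem coeff_nodal_univ_of_tgrsTrinomial (hsplit : tgrsTrinomial n B = ∏ i, (X - C (A i)))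
    (hn : 2 ≤ n) :
    (Lagrange.nodal Finset.univ A).coeff (n - 1) = B := by
  rw [nodal_univ_eq_tgrsTrinomial hsplit, tgrsTrinomial]
  simp [coeff_X_pow, coeff_one, show n - 1 ≠ n by omega, show n - 1 ≠ 0 by omega]

theorem eval_tgrsTrinomial_node (hsplit : tgrsTrinomial n B = ∏ i, (X - C (A i)))
    (i : Fin n) : A i ^ n + B * A i ^ (n - 1) + 1 = 0 := by
  have hnode := Lagrange.eval_nodal_at_node (v := A) (Finset.mem_univ i)
  rw [nodal_univ_eq_tgrsTrinomial hsplit] at hnode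
  simpa [tgrsTrinomial] using hnode

theorem node_ne_zero_of_tgrsTrinomial (hsplit : tgrsTrinomial n B = ∏ i, (X - C (A i)))
    (hn : 2 ≤ n) (i : Fin n) : A i ≠ 0 := fun h => by
  simpa [h, zero_pow (show n ≠ 0 by omega), zero_pow (show n - 1 ≠ 0 by omega)] using
    eval_tgrsTrinomial_node hsplit i

theorem eval_derivative_nodal_ne_zero_of_tgrsTrinomial
    (hsplit : tgrsTrinomial n B = ∏ i, (X - C (A i)))
    (hn : 2 ≤ n) (hnK : (n : K) ≠ 0)
    (hroot : ∀ i, A i ≠ B * (1 - n) * (n : K)⁻¹) (i : Fin n) :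
    (derivative (Lagrange.nodal Finset.univ A)).eval (A i) ≠ 0 := by
  rw [nodal_univ_eq_tgrsTrinomial hsplit, eval_derivative_tgrsTrinomial hn]
  refine mul_ne_zero (pow_ne_zero _ (node_ne_zero_of_tgrsTrinomial hsplit hn i)) fun h => hroot i ?_
  field_simp
  linear_combination h

theorem injective_of_tgrsTrinomial (hsplit : tgrsTrinomial n B = ∏ i, (X - C (A i)))
    (hn : 2 ≤ n) (hnK : (n : K) ≠ 0)
    (hroot : ∀ i, A i ≠ B * (1 - n) * (n : K)⁻¹) : Function.Injective A := by
  intro i j hij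
  by_contra hne
  apply eval_derivative_nodal_ne_zero_of_tgrsTrinomial hsplit hn hnK hroot i
  rw [Lagrange.eval_nodal_derivative_eval_node_eq (Finset.mem_univ i), Lagrange.eval_nodal]
  exact Finset.prod_eq_zero (Finset.mem_erase.mpr ⟨Ne.symm hne, Finset.mem_univ j⟩)
    (by rw [hij, sub_self])

/-- With `m = tgrsTrinomial n B` and `x = A i`: since `m(x) = 0`,
`x m'(x) = n xⁿ + (n - 1) B xⁿ⁻¹ = xⁿ - n + 1`. -/
theorem nodalWeight_univ_of_tgrsTrinomial (hsplit : tgrsTrinomial n B = ∏ i, (X - C (A i)))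
    (hn : 2 ≤ n) (i : Fin n) :
    Lagrange.nodalWeight Finset.univ A i = A i / (A i ^ n - n + 1) := by
  have hid : A i ^ n - n + 1 = A i * (derivative (Lagrange.nodal Finset.univ A)).eval (A i) := by
    rw [nodal_univ_eq_tgrsTrinomial hsplit, eval_derivative_tgrsTrinomial hn]
    have hnode := eval_tgrsTrinomial_node hsplit i
    obtain ⟨j, rfl⟩ : ∃ j, n = j + 2 := ⟨n - 2, by omega⟩
    simp only [show j + 2 - 1 = j + 1 by omega, add_tsub_cancel_right] at hnode ⊢
    push_cast
    linear_combination (-(j : K) - 1) * hnode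
  rw [hid, div_mul_cancel_left₀ (node_ne_zero_of_tgrsTrinomial hsplit hn i),
    Lagrange.nodalWeight_eq_eval_derivative_nodal (Finset.mem_univ i)]

end Trinomial

theorem natCast_ne_zero_of_coprime_card {K : Type*} [Field K] [Fintype K] {m : ℕ}
    (h : Nat.Coprime (Fintype.card K) m) : (m : K) ≠ 0 := by
  have hK := (Nat.isCoprime_iff_coprime.mpr h).map (Int.castRingHom K)
  simp only [eq_intCast, Int.cast_natCast, FiniteField.cast_card_eq_zero,
    isCoprime_zero_left] at hK
  exact hK.ne_zero

theorem tgrs_mds_or_nmds_of_tgrsTrinomial {K : Type*} [Field K] {n k : ℕ} {B : K}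
    {A v : Fin n → K}
    (hn : n = k + k) (hk : 0 < k) (hnK : (n : K) ≠ 0) (h2 : (2 : K) ≠ 0) (hB : B ≠ 0)
    (hsplit : tgrsTrinomial n B = ∏ i, (X - C (A i)))
    (hroot : ∀ i, A i ≠ B * (1 - n) * (n : K)⁻¹) (hv : ∀ i, v i ^ 2 = A i / (A i ^ n - n + 1)) :
    ((∀ S : Finset (Fin n), #S = k → ∑ i ∈ S, A i ≠ -(B / 2)) →
      IsSelfDual (TGRSCode K n k A v (2 * B⁻¹)) ∧
        IsMinDist (TGRSCode K n k A v (2 * B⁻¹)) (n - k + 1)) ∧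
    ((∃ S : Finset (Fin n), #S = k ∧ ∑ i ∈ S, A i = -(B / 2)) →
      IsSelfDual (TGRSCode K n k A v (2 * B⁻¹)) ∧
        IsMinDist (TGRSCode K n k A v (2 * B⁻¹)) (n - k) ∧
        IsMinDist (dualCode (TGRSCode K n k A v (2 * B⁻¹))) k) := by
  have hA := injective_of_tgrsTrinomial hsplit (by omega) hnK hroot
  have hvA : ∀ i, v i ^ 2 = Lagrange.nodalWeight Finset.univ A i := fun i =>
    (hv i).trans (nodalWeight_univ_of_tgrsTrinomial hsplit (by omega) i).symm
  have hv0 := ne_zero_of_sq_eq_nodalWeight hA hvA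
  have hη : 2 * B⁻¹ ≠ 0 := mul_ne_zero h2 (inv_ne_zero hB)
  have hηinv : -(2 * B⁻¹)⁻¹ = -(B / 2) := by rw [mul_inv, inv_inv, div_eq_inv_mul]
  have hsd : IsSelfDual (TGRSCode K n k A v (2 * B⁻¹)) :=
    isSelfDual_tgrs hn hk hA hvA (by
      rw [coeff_nodal_univ_of_tgrsTrinomial hsplit (by omega)]
      field_simp)
  refine ⟨fun hne => ⟨hsd, isMinDist_tgrs_of_forall_sum_ne hA hv0 hk (by omega) hη
    (hηinv ▸ hne)⟩, fun hex => ?_⟩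
  have hmin := isMinDist_tgrs_of_exists_sum_eq hA hv0 hk (by omega) hη (hηinv ▸ hex)
  refine ⟨hsd, hmin, ?_⟩
  rw [← hsd]
  convert hmin using 1
  omega

theorem tgrs_selfdual_mds_or_nmds_Fq2_general (q n : ℕ) (hq : Odd q)
    (hn6 : 6 ≤ n) (hneven : Even n) (hqn : Nat.Coprime q n)
    (Fq : Type*) [Field Fq] [Fintype Fq] (hcardq : Fintype.card Fq = q)
    (F : Type*) [Field F] [Algebra Fq F]
    (b : Fq) (hb : b ≠ 0)
    (α : Fin n → Fq)
    (hsplit : (X ^ n + Polynomial.C b * X ^ (n - 1) + 1 : Fq[X]) =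
      ∏ i, (X - Polynomial.C (α i)))
    (hroot1 : ∀ i, α i ≠ b * (1 - (n : Fq)) * (n : Fq)⁻¹)
    (v : Fin n → F)
    (hv : ∀ i, v i ^ 2 =
      algebraMap Fq F (α i) / ((algebraMap Fq F (α i)) ^ n - (n : F) + 1)) :
    ((∀ I : Finset (Fin n), I.card = n / 2 → ∑ i ∈ I, α i ≠ -b / 2) →
      IsSelfDual (TGRSCode F n (n / 2) (fun i => algebraMap Fq F (α i)) v
          (2 * (algebraMap Fq F b)⁻¹)) ∧
        IsMinDist (TGRSCode F n (n / 2) (fun i => algebraMap Fq F (α i)) v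
          (2 * (algebraMap Fq F b)⁻¹)) (n - n / 2 + 1)) ∧
    ((∃ I : Finset (Fin n), I.card = n / 2 ∧ ∑ i ∈ I, α i = -b / 2) →
      IsSelfDual (TGRSCode F n (n / 2) (fun i => algebraMap Fq F (α i)) v
          (2 * (algebraMap Fq F b)⁻¹)) ∧
        IsMinDist (TGRSCode F n (n / 2) (fun i => algebraMap Fq F (α i)) v
          (2 * (algebraMap Fq F b)⁻¹)) (n - n / 2) ∧
        IsMinDist (dualCode (TGRSCode F n (n / 2)
          (fun i => algebraMap Fq F (α i)) v (2 * (algebraMap Fq F b)⁻¹))) (n / 2)) := by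
  set ι := algebraMap Fq F
  have hnF : (n : F) ≠ 0 := by
    simpa [ι] using (map_ne_zero ι).mpr (natCast_ne_zero_of_coprime_card (hcardq ▸ hqn))
  have h2 : ((2 : ℕ) : Fq) ≠ 0 :=
    natCast_ne_zero_of_coprime_card (hcardq ▸ Nat.coprime_two_right.mpr hq)
  have h2F : (2 : F) ≠ 0 := by
    rw [← map_ofNat ι 2]
    exact (map_ne_zero ι).mpr (by exact_mod_cast h2)
  have hsplitF : tgrsTrinomial n (ι b) = ∏ i, (X - C (ι (α i))) := by
    simpa [tgrsTrinomial, Polynomial.map_prod] using congrArg (Polynomial.map ι) hsplit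
  have hrootF : ∀ i, ι (α i) ≠ ι b * (1 - n) * (n : F)⁻¹ := fun i => by
    simpa [ι] using ι.injective.ne (hroot1 i)
  have hsum : ∀ I : Finset (Fin n), ∑ i ∈ I, α i = -b / 2 ↔ ∑ i ∈ I, ι (α i) = -(ι b / 2) :=
    fun I => by rw [← ι.injective.eq_iff, map_sum, map_div₀, map_neg, map_ofNat, neg_div]
  obtain ⟨hmds, hnmds⟩ := tgrs_mds_or_nmds_of_tgrsTrinomial (k := n / 2)
    (by obtain ⟨t, ht⟩ := hneven; omega)
    (by omega) hnF h2F ((map_ne_zero ι).mpr hb) hsplitF hrootF hv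
  exact ⟨fun hne => hmds fun I hI => (hsum I).not.mp (hne I hI),
    fun ⟨I, hI, hIsum⟩ => hnmds ⟨I, hI, (hsum I).mp hIsum⟩⟩

/-- in the setting of the construction from `m(x) = x^n + b x^{n-1} + 1`
over `F_q`, with `v_i ∈ F_{q²}` satisfying `v_i² = α_i/(α_i^n - n + 1)` and
`η = 2b⁻¹`: if `Σ_{i∈I} α_i ≠ -b/2` for every `I` of size `n/2` then
`C_{n/2}(α,v,η)` is a self-dual MDS code over `F_{q²}`; otherwise it is a self-dual
NMDS code over `F_{q²}`. -/
theorem tgrs_selfdual_mds_or_nmds_Fq2 (q n : ℕ) (hq : Odd q) (hqpp : IsPrimePow q)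
    (hn6 : 6 ≤ n) (hneven : Even n) (hqn : Nat.Coprime q n)
    (Fq : Type*) [Field Fq] [Fintype Fq] (hcardq : Fintype.card Fq = q)
    (F : Type*) [Field F] [Fintype F] [Algebra Fq F]
    (hcardF : Fintype.card F = q ^ 2)
    (b : Fq) (hb : b ≠ 0)
    (α : Fin n → Fq)
    (hsplit : (X ^ n + Polynomial.C b * X ^ (n - 1) + 1 : Fq[X]) =
      ∏ i, (X - Polynomial.C (α i)))
    (hroot1 : ∀ i, α i ≠ b * (1 - (n : Fq)) * (n : Fq)⁻¹)
    (hroot2 : ∀ i, α i ^ n ≠ (n : Fq) - 1)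
    (v : Fin n → F)
    (hv : ∀ i, v i ^ 2 =
      algebraMap Fq F (α i) / ((algebraMap Fq F (α i)) ^ n - (n : F) + 1)) :
    ((∀ I : Finset (Fin n), I.card = n / 2 → ∑ i ∈ I, α i ≠ -b / 2) →
      IsSelfDual (TGRSCode F n (n / 2) (fun i => algebraMap Fq F (α i)) v
          (2 * (algebraMap Fq F b)⁻¹)) ∧
        IsMinDist (TGRSCode F n (n / 2) (fun i => algebraMap Fq F (α i)) v
          (2 * (algebraMap Fq F b)⁻¹)) (n - n / 2 + 1)) ∧
    ((∃ I : Finset (Fin n), I.card = n / 2 ∧ ∑ i ∈ I, α i = -b / 2) →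
      IsSelfDual (TGRSCode F n (n / 2) (fun i => algebraMap Fq F (α i)) v
          (2 * (algebraMap Fq F b)⁻¹)) ∧
        IsMinDist (TGRSCode F n (n / 2) (fun i => algebraMap Fq F (α i)) v
          (2 * (algebraMap Fq F b)⁻¹)) (n - n / 2) ∧
        IsMinDist (dualCode (TGRSCode F n (n / 2)
          (fun i => algebraMap Fq F (α i)) v (2 * (algebraMap Fq F b)⁻¹))) (n / 2)) :=
  tgrs_selfdual_mds_or_nmds_Fq2_general q n hq hn6 hneven hqn Fq hcardq F b hb α hsplit hroot1 v hv
end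
end
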